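/- arXiv:2308.15568 — 5 statements merged into one kernel-verified Lean document; each statement's English description precedes it below -/
import Mathlib

section
/- Let u, v be vertices of G with shortest-path distance d_G(u,v) = r+1. If the message-passing layers satisfy ‖Dφ_l‖ ≤ α and ‖Dψ_l‖ ≤ β (operator norms of the total derivatives) for all layers 0 ≤ l ≤ r+1, then the Jacobian of the feature of u after r+1 layers with respect to the input feature of v satisfies ‖∂h_u^{(r+1)}/∂x_v‖ ≤ (αβ)^{r+1} · (Ã^{r+1})_{uv}. -/
open Matrix Finset

variable {V : Type*}

/-- The normalized adjacency matrix with self-loops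
`Ã = D^{-1/2}(A+I)D^{-1/2}`, where `D` is the degree matrix of `A + I`,
i.e. `D_{uu} = deg(u) + 1`. -/
noncomputable def Atil [Fintype V] [DecidableEq V] (G : SimpleGraph V)
    [DecidableRel G.Adj] : Matrix V V ℝ :=
  Matrix.of fun i j =>
    (Real.sqrt ((G.degree i : ℝ) + 1))⁻¹ * ((G.adjMatrix ℝ + 1) i j) *
      (Real.sqrt ((G.degree j : ℝ) + 1))⁻¹

/-- The MPNN update: `h_v^{(0)} = x_v` and
`h_u^{(l)} = φ_l (h_u^{(l-1)}, Σ_v Ã_{uv} ψ_l (h_u^{(l-1)}, h_v^{(l-1)}))`. -/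
noncomputable def mpnn [Fintype V] [DecidableEq V] (G : SimpleGraph V)
    [DecidableRel G.Adj] {p : ℕ}
    (φ ψ : ℕ → EuclideanSpace ℝ (Fin p) × EuclideanSpace ℝ (Fin p) →
      EuclideanSpace ℝ (Fin p)) :
    ℕ → V → (V → EuclideanSpace ℝ (Fin p)) → EuclideanSpace ℝ (Fin p)
  | 0, u, X => X u
  | l + 1, u, X =>
      φ (l + 1) (mpnn G φ ψ l u X,
        ∑ w : V, Atil G u w • ψ (l + 1) (mpnn G φ ψ l u X, mpnn G φ ψ l w X))

section Aux

variable [Fintype V] [DecidableEq V] (G : SimpleGraph V) [DecidableRel G.Adj]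

lemma Atil_nonneg (i j : V) : 0 ≤ Atil G i j := by
  unfold Atil
  simp only [Matrix.of_apply]
  refine mul_nonneg (mul_nonneg (inv_nonneg.2 (Real.sqrt_nonneg _)) ?_)
    (inv_nonneg.2 (Real.sqrt_nonneg _))
  rw [Matrix.add_apply, Matrix.one_apply, SimpleGraph.adjMatrix_apply]
  split_ifs <;> norm_num

lemma Atil_pow_nonneg (l : ℕ) (i j : V) : 0 ≤ (Atil G ^ l) i j := by
  induction l generalizing i j with
  | zero =>
    rw [pow_zero, Matrix.one_apply]
    split_ifs <;> norm_num
  | succ l ih =>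
    rw [pow_succ, Matrix.mul_apply]
    exact Finset.sum_nonneg fun k _ => mul_nonneg (ih i k) (Atil_nonneg G k j)

lemma Atil_support {i j : V} (h : Atil G i j ≠ 0) : i = j ∨ G.Adj i j := by
  by_contra hc
  push_neg at hc
  apply h
  unfold Atil
  simp only [Matrix.of_apply, Matrix.add_apply, Matrix.one_apply,
    SimpleGraph.adjMatrix_apply, if_neg hc.1, if_neg hc.2]
  ring

lemma Atil_dist (hG : G.Connected) {i j : V} (v : V) (h : Atil G i j ≠ 0) :
    G.dist i v ≤ G.dist j v + 1 := by
  rcases Atil_support G h with rfl | hadj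
  · omega
  · have h1 : G.dist i j = 1 := SimpleGraph.dist_eq_one_iff_adj.2 hadj
    have h2 := hG.dist_triangle (u := i) (v := j) (w := v)
    omega

variable {p : ℕ}
  (φ ψ : ℕ → EuclideanSpace ℝ (Fin p) × EuclideanSpace ℝ (Fin p) →
    EuclideanSpace ℝ (Fin p))

/-- If `l < d(w,v)`, then `h_w^{(l)}` does not depend on `x_v`. -/
lemma mpnn_update_eq (hG : G.Connected) (X : V → EuclideanSpace ℝ (Fin p)) (v : V)
    (y : EuclideanSpace ℝ (Fin p)) :
    ∀ l (w : V), l < G.dist w v →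
      mpnn G φ ψ l w (Function.update X v y) = mpnn G φ ψ l w X := by
  intro l
  induction l with
  | zero =>
    intro w hw
    have hwv : w ≠ v := by
      rintro rfl
      simp [SimpleGraph.dist_self] at hw
    simp [mpnn, Function.update_of_ne hwv]
  | succ l ih =>
    intro w hw
    have hw' : l < G.dist w v := by omega
    simp only [mpnn]
    rw [ih w hw']
    have hsum : (∑ w' : V, Atil G w w' •
          ψ (l + 1) (mpnn G φ ψ l w X, mpnn G φ ψ l w' (Function.update X v y)))
        = ∑ w' : V, Atil G w w' • ψ (l + 1) (mpnn G φ ψ l w X, mpnn G φ ψ l w' X) := by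
      refine Finset.sum_congr rfl fun w' _ => ?_
      by_cases h0 : Atil G w w' = 0
      · simp [h0]
      · rw [ih w' (by have := Atil_dist G hG v h0; omega)]
    rw [hsum]

private lemma norm_prod_zero_left {E F G' : Type*} [NormedAddCommGroup E]
    [NormedSpace ℝ E] [NormedAddCommGroup F] [NormedSpace ℝ F]
    [NormedAddCommGroup G'] [NormedSpace ℝ G'] (S : E →L[ℝ] G') :
    ‖((0 : E →L[ℝ] F)).prod S‖ ≤ ‖S‖ := by
  refine ContinuousLinearMap.opNorm_le_bound _ (norm_nonneg S) fun x => ?_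
  calc ‖(((0 : E →L[ℝ] F)).prod S) x‖ = ‖S x‖ := by
        simp [ContinuousLinearMap.prod_apply, Prod.norm_def]
    _ ≤ ‖S‖ * ‖x‖ := S.le_opNorm x

/-- Key inductive lemma: existence of the derivative together with the norm bound
below the distance. -/
lemma mpnn_key (hG : G.Connected)
    (hφ : ∀ l, ContDiff ℝ 1 (φ l)) (hψ : ∀ l, ContDiff ℝ 1 (ψ l))
    (X : V → EuclideanSpace ℝ (Fin p)) (v : V) (α β : ℝ) :
    ∀ l (w : V) (y : EuclideanSpace ℝ (Fin p)),
      ∃ D : EuclideanSpace ℝ (Fin p) →L[ℝ] EuclideanSpace ℝ (Fin p),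
        HasFDerivAt (fun y => mpnn G φ ψ l w (Function.update X v y)) D y ∧
        (l ≤ G.dist w v →
          (∀ k ≤ l, ∀ z, ‖fderiv ℝ (φ k) z‖ ≤ α) →
          (∀ k ≤ l, ∀ z, ‖fderiv ℝ (ψ k) z‖ ≤ β) →
          ‖D‖ ≤ (α * β) ^ l * (Atil G ^ l) w v) := by
  intro l
  induction l with
  | zero =>
    intro w y
    by_cases hwv : w = v
    · refine ⟨ContinuousLinearMap.id ℝ _, ?_, ?_⟩
      · have heq : (fun y : EuclideanSpace ℝ (Fin p) =>
            mpnn G φ ψ 0 w (Function.update X v y)) = fun y => y := by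
          funext y'
          rw [hwv]
          simp [mpnn]
        rw [heq]
        exact hasFDerivAt_id y
      · intro _ _ _
        rw [hwv]
        simp only [pow_zero, Matrix.one_apply_eq, one_mul]
        exact ContinuousLinearMap.norm_id_le
    · refine ⟨0, ?_, ?_⟩
      · have heq : (fun y : EuclideanSpace ℝ (Fin p) =>
            mpnn G φ ψ 0 w (Function.update X v y)) = fun _ => X w := by
          funext y'
          simp [mpnn, Function.update_of_ne hwv]
        rw [heq]
        exact hasFDerivAt_const _ _
      · intro _ _ _
        simp only [pow_zero, one_mul, Matrix.one_apply_ne hwv, norm_zero]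
        exact le_refl 0
  | succ l ih =>
    intro w y
    choose D hD hDb using fun w' => ih w' y
    -- derivative of the ψ-terms
    have hψd : ∀ w' : V, HasFDerivAt
        (fun y => ψ (l + 1) (mpnn G φ ψ l w (Function.update X v y),
          mpnn G φ ψ l w' (Function.update X v y)))
        ((fderiv ℝ (ψ (l + 1)) (mpnn G φ ψ l w (Function.update X v y),
          mpnn G φ ψ l w' (Function.update X v y))).comp ((D w).prod (D w'))) y :=
      fun w' => HasFDerivAt.comp y
        (((hψ (l + 1)).differentiable one_ne_zero).differentiableAt.hasFDerivAt)
        (HasFDerivAt.prodMk (hD w) (hD w'))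
    set S : EuclideanSpace ℝ (Fin p) →L[ℝ] EuclideanSpace ℝ (Fin p) :=
      ∑ w' : V, Atil G w w' •
        ((fderiv ℝ (ψ (l + 1)) (mpnn G φ ψ l w (Function.update X v y),
          mpnn G φ ψ l w' (Function.update X v y))).comp ((D w).prod (D w'))) with hSdef
    have hS : HasFDerivAt (fun y => ∑ w' : V, Atil G w w' •
        ψ (l + 1) (mpnn G φ ψ l w (Function.update X v y),
          mpnn G φ ψ l w' (Function.update X v y))) S y :=
      HasFDerivAt.fun_sum fun w' _ => (hψd w').const_smul (Atil G w w')
    refine ⟨(fderiv ℝ (φ (l + 1))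
        (mpnn G φ ψ l w (Function.update X v y),
          ∑ w' : V, Atil G w w' • ψ (l + 1) (mpnn G φ ψ l w (Function.update X v y),
            mpnn G φ ψ l w' (Function.update X v y)))).comp ((D w).prod S), ?_, ?_⟩
    · simp only [mpnn]
      exact HasFDerivAt.comp y
        (((hφ (l + 1)).differentiable one_ne_zero).differentiableAt.hasFDerivAt)
        (HasFDerivAt.prodMk (hD w) hS)
    · intro hlw hα hβ
      have hα0 : 0 ≤ α := le_trans (norm_nonneg _) (hα (l + 1) le_rfl (0, 0))
      have hβ0 : 0 ≤ β := le_trans (norm_nonneg _) (hβ (l + 1) le_rfl (0, 0))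
      -- the derivative at `w` vanishes since `l < d(w,v)`
      have hDw0 : D w = 0 := by
        have hconst : (fun y : EuclideanSpace ℝ (Fin p) =>
            mpnn G φ ψ l w (Function.update X v y)) = fun _ => mpnn G φ ψ l w X := by
          funext y'
          exact mpnn_update_eq G φ ψ hG X v y' l w (by omega)
        have h1 := (hD w).fderiv
        rw [hconst, fderiv_fun_const] at h1
        simpa using h1.symm
      -- bound on `S`
      have hSb : ‖S‖ ≤ ∑ w' : V, Atil G w w' *
          (β * ((α * β) ^ l * (Atil G ^ l) w' v)) := by
        rw [hSdef]
        refine le_trans (norm_sum_le _ _) (Finset.sum_le_sum fun w' _ => ?_)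
        rw [norm_smul (Atil G w w')
            ((fderiv ℝ (ψ (l + 1)) (mpnn G φ ψ l w (Function.update X v y),
              mpnn G φ ψ l w' (Function.update X v y))).comp ((D w).prod (D w'))),
          Real.norm_eq_abs, abs_of_nonneg (Atil_nonneg G w w')]
        by_cases h0 : Atil G w w' = 0
        · rw [h0, zero_mul, zero_mul]
        · have hd : l ≤ G.dist w' v := by
            have := Atil_dist G hG v h0
            omega
        -- bound for the composed map
          have hcomp : ‖(fderiv ℝ (ψ (l + 1)) (mpnn G φ ψ l w (Function.update X v y),
              mpnn G φ ψ l w' (Function.update X v y))).comp ((D w).prod (D w'))‖ ≤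
              β * ((α * β) ^ l * (Atil G ^ l) w' v) := by
            calc ‖(fderiv ℝ (ψ (l + 1)) _).comp ((D w).prod (D w'))‖
                ≤ ‖fderiv ℝ (ψ (l + 1)) _‖ * ‖(D w).prod (D w')‖ :=
                  ContinuousLinearMap.opNorm_comp_le _ _
              _ ≤ β * ‖D w'‖ := by
                  refine mul_le_mul (hβ (l + 1) le_rfl _) ?_ (norm_nonneg _) hβ0
                  rw [hDw0]
                  exact norm_prod_zero_left _
              _ ≤ β * ((α * β) ^ l * (Atil G ^ l) w' v) :=
                  mul_le_mul_of_nonneg_left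
                    (hDb w' hd (fun k hk => hα k (by omega))
                      (fun k hk => hβ k (by omega))) hβ0
          exact mul_le_mul_of_nonneg_left hcomp (Atil_nonneg G w w')
      calc ‖(fderiv ℝ (φ (l + 1)) _).comp ((D w).prod S)‖
          ≤ ‖fderiv ℝ (φ (l + 1)) _‖ * ‖(D w).prod S‖ :=
            ContinuousLinearMap.opNorm_comp_le _ _
        _ ≤ α * ‖S‖ := by
            refine mul_le_mul (hα (l + 1) le_rfl _) ?_ (norm_nonneg _) hα0
            rw [hDw0]
            exact norm_prod_zero_left _
        _ ≤ α * ∑ w' : V, Atil G w w' * (β * ((α * β) ^ l * (Atil G ^ l) w' v)) :=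
            mul_le_mul_of_nonneg_left hSb hα0
        _ = (α * β) ^ (l + 1) * (Atil G ^ (l + 1)) w v := by
            rw [pow_succ' (Atil G), Matrix.mul_apply, Finset.mul_sum, Finset.mul_sum]
            exact Finset.sum_congr rfl fun w' _ => by ring

end Aux

/-- Topping et al.: if `d_G(u,v) = r + 1` and the layer maps have
derivative norms bounded by `α` and `β`, then
`‖∂h_u^{(r+1)}/∂x_v‖ ≤ (αβ)^{r+1} (Ã^{r+1})_{uv}`. -/
theorem oversquashing_jacobian_bound_distance
    [Fintype V] [DecidableEq V] (G : SimpleGraph V) [DecidableRel G.Adj]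
    (hG : G.Connected) {p : ℕ}
    (φ ψ : ℕ → EuclideanSpace ℝ (Fin p) × EuclideanSpace ℝ (Fin p) →
      EuclideanSpace ℝ (Fin p))
    (hφ : ∀ l, ContDiff ℝ 1 (φ l)) (hψ : ∀ l, ContDiff ℝ 1 (ψ l))
    (r : ℕ) (u v : V) (hdist : G.dist u v = r + 1)
    (α β : ℝ)
    (hα : ∀ l ≤ r + 1, ∀ z, ‖fderiv ℝ (φ l) z‖ ≤ α)
    (hβ : ∀ l ≤ r + 1, ∀ z, ‖fderiv ℝ (ψ l) z‖ ≤ β)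
    (X : V → EuclideanSpace ℝ (Fin p)) :
    ‖fderiv ℝ (fun y => mpnn G φ ψ (r + 1) u (Function.update X v y)) (X v)‖ ≤
      (α * β) ^ (r + 1) * ((Atil G ^ (r + 1)) u v) := by
  obtain ⟨D, hD, hb⟩ := mpnn_key G φ ψ hG hφ hψ X v α β (r + 1) u (X v)
  rw [hD.fderiv]
  exact hb (by omega) hα hβ
end

section
/- Let G be a connected simple graph on n vertices and let u, v be distinct vertices with (u,v) ∉ E, and let G + uv denote the graph obtained from G by adding the edge (u,v). Then the total effective resistance drops by exactly R_tot(G) − R_tot(G + uv) = n · B_{u,v}² / (1 + R_{u,v}). -/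
open Matrix Finset

variable {V : Type*}

/-- `P` is the Moore–Penrose pseudoinverse of `L` (the four Penrose conditions,
stated with the transpose since the matrices are real). -/
def IsMoorePenroseInv [Fintype V] (L P : Matrix V V ℝ) : Prop :=
  L * P * L = L ∧ P * L * P = P ∧ (L * P)ᵀ = L * P ∧ (P * L)ᵀ = P * L

/-- Effective resistance `R_{a,b} = (1_a − 1_b)ᵀ L⁺ (1_a − 1_b)`, where `Lp`
plays the role of the pseudoinverse `L⁺` of the combinatorial Laplacian. -/
noncomputable def effRes [Fintype V] [DecidableEq V] (Lp : Matrix V V ℝ)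
    (a b : V) : ℝ :=
  ((Pi.single a 1 : V → ℝ) - (Pi.single b 1 : V → ℝ)) ⬝ᵥ
    Lp.mulVec ((Pi.single a 1 : V → ℝ) - (Pi.single b 1 : V → ℝ))

/-- Squared biharmonic distance `B_{a,b}² = (1_a − 1_b)ᵀ (L⁺)² (1_a − 1_b)`. -/
noncomputable def biharmSq [Fintype V] [DecidableEq V] (Lp : Matrix V V ℝ)
    (a b : V) : ℝ :=
  ((Pi.single a 1 : V → ℝ) - (Pi.single b 1 : V → ℝ)) ⬝ᵥ
    (Lp * Lp).mulVec ((Pi.single a 1 : V → ℝ) - (Pi.single b 1 : V → ℝ))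

/-- Total effective resistance `R_tot = Σ_{⟨a,b⟩ unordered pairs} R_{a,b}`:
since `R` is symmetric and `R_{a,a} = 0`, this equals half the sum over all
ordered pairs. -/
noncomputable def totalRes [Fintype V] [DecidableEq V] (Lp : Matrix V V ℝ) : ℝ :=
  (∑ a : V, ∑ b : V, effRes Lp a b) / 2

/-! ### Auxiliary lemmas -/

section Aux
variable [Fintype V]

lemma myMul_vecMulVec (w v : V → ℝ) (M : Matrix V V ℝ) :
    M * vecMulVec w v = vecMulVec (M *ᵥ w) v := by
  ext i j
  simp only [vecMulVec_apply, mul_apply, mulVec, dotProduct, Finset.sum_mul]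
  exact Finset.sum_congr rfl fun k _ => by ring

lemma myVecMulVec_mulVec (w v x : V → ℝ) :
    vecMulVec w v *ᵥ x = (v ⬝ᵥ x) • w := by
  ext i
  simp only [mulVec, dotProduct, vecMulVec_apply, Pi.smul_apply, smul_eq_mul, Finset.sum_mul]
  exact Finset.sum_congr rfl fun k _ => by ring

lemma myVecMulVec_trans (w v : V → ℝ) :
    (vecMulVec w v)ᵀ = vecMulVec v w := by
  ext i j; simp [vecMulVec_apply, mul_comm]

lemma myTrace_vecMulVec (w v : V → ℝ) :
    trace (vecMulVec w v) = w ⬝ᵥ v := by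
  simp [Matrix.trace, vecMulVec_apply, dotProduct, Matrix.diag]

lemma myVecMulVec_mul_vecMulVec (a b c d : V → ℝ) :
    vecMulVec a b * vecMulVec c d = (b ⬝ᵥ c) • vecMulVec a d := by
  ext i j
  simp only [mul_apply, vecMulVec_apply, Matrix.smul_apply, smul_eq_mul, dotProduct, Finset.sum_mul]
  exact Finset.sum_congr rfl fun k _ => by ring

lemma mp_unique [DecidableEq V] {M P Q : Matrix V V ℝ}
    (hP : IsMoorePenroseInv M P) (hQ : IsMoorePenroseInv M Q) : P = Q := by
  obtain ⟨hP1, hP2, hP3, hP4⟩ := hP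
  obtain ⟨hQ1, hQ2, hQ3, hQ4⟩ := hQ
  have hMP : M * P = M * Q := by
    calc M * P = (M * Q * M) * P := by rw [hQ1]
    _ = (M * Q) * (M * P) := by noncomm_ring
    _ = ((M * P) * (M * Q))ᵀ := by rw [transpose_mul, hQ3, hP3]
    _ = ((M * P * M) * Q)ᵀ := by noncomm_ring
    _ = (M * Q)ᵀ := by rw [hP1]
    _ = M * Q := hQ3
  have hPM : P * M = Q * M := by
    calc P * M = P * (M * Q * M) := by rw [hQ1]
    _ = (P * M) * (Q * M) := by noncomm_ring
    _ = ((Q * M) * (P * M))ᵀ := by rw [transpose_mul, hP4, hQ4]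
    _ = (Q * (M * P * M))ᵀ := by noncomm_ring
    _ = (Q * M)ᵀ := by rw [hP1]
    _ = Q * M := hQ4
  calc P = P * M * P := hP2.symm
  _ = (Q * M) * P := by rw [hPM]
  _ = Q * (M * P) := by rw [mul_assoc]
  _ = Q * (M * Q) := by rw [hMP]
  _ = Q * M * Q := by rw [mul_assoc]
  _ = Q := hQ2

lemma mp_transpose_symm [DecidableEq V] {M P : Matrix V V ℝ}
    (hM : Mᵀ = M) (hP : IsMoorePenroseInv M P) : Pᵀ = P := by
  obtain ⟨h1, h2, h3, h4⟩ := hP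
  refine mp_unique (M := M) ?_ ⟨h1, h2, h3, h4⟩
  constructor
  · rw [← hM]; calc Mᵀ * Pᵀ * Mᵀ = (M * (P * M))ᵀ := by simp [transpose_mul, mul_assoc]
    _ = ((M * P) * M)ᵀ := by rw [mul_assoc]
    _ = Mᵀ := by rw [h1]
  constructor
  · calc Pᵀ * M * Pᵀ = Pᵀ * Mᵀ * Pᵀ := by rw [hM]
    _ = (P * (M * P))ᵀ := by simp [transpose_mul, mul_assoc]
    _ = ((P * M) * P)ᵀ := by rw [mul_assoc]
    _ = Pᵀ := by rw [h2]
  constructor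
  · calc (M * Pᵀ)ᵀ = P * Mᵀ := by rw [transpose_mul, transpose_transpose]
    _ = P * M := by rw [hM]
    _ = (P * M)ᵀ := h4.symm
    _ = Mᵀ * Pᵀ := by rw [transpose_mul]
    _ = M * Pᵀ := by rw [hM]
  · calc (Pᵀ * M)ᵀ = Mᵀ * P := by rw [transpose_mul, transpose_transpose]
    _ = M * P := by rw [hM]
    _ = (M * P)ᵀ := h3.symm
    _ = Pᵀ * Mᵀ := by rw [transpose_mul]
    _ = Pᵀ * M := by rw [hM]

lemma mp_comm [DecidableEq V] {M P : Matrix V V ℝ}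
    (hM : Mᵀ = M) (hP : IsMoorePenroseInv M P) : M * P = P * M := by
  have hPs := mp_transpose_symm hM hP
  calc M * P = (M * P)ᵀ := hP.2.2.1.symm
  _ = Pᵀ * Mᵀ := by rw [transpose_mul]
  _ = P * M := by rw [hPs, hM]

lemma mp_eq_sq_mul [DecidableEq V] {M P : Matrix V V ℝ}
    (hM : Mᵀ = M) (hP : IsMoorePenroseInv M P) : P = (P * P) * M := by
  calc P = P * M * P := hP.2.1.symm
  _ = P * (M * P) := by rw [mul_assoc]
  _ = P * (P * M) := by rw [mp_comm hM hP]
  _ = (P * P) * M := by rw [mul_assoc]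

lemma diag_of_rowsum [DecidableEq V] (M : Matrix V V ℝ)
    (h : M *ᵥ (fun _ => 1) = 0) (i : V) :
    M i i = - ∑ j ∈ univ.erase i, M i j := by
  have h0 : ∑ j : V, M i j = 0 := by
    have := congrFun h i
    simpa [mulVec, dotProduct] using this
  have := Finset.sum_erase_add univ (fun j => M i j) (mem_univ i)
  linarith [this.trans h0]

lemma wsum_zero [DecidableEq V] {u v : V} :
    ((Pi.single u 1 : V → ℝ) - (Pi.single v 1 : V → ℝ)) ⬝ᵥ (fun _ => (1:ℝ)) = 0 := by
  simp [dotProduct, Pi.single_apply, Finset.sum_sub_distrib]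

lemma wprod [DecidableEq V] (u v i j : V) (hij : i ≠ j) :
    ((Pi.single u 1 : V → ℝ) - (Pi.single v 1 : V → ℝ)) i *
      ((Pi.single u 1 : V → ℝ) - (Pi.single v 1 : V → ℝ)) j =
    if (i = u ∧ j = v) ∨ (i = v ∧ j = u) then (-1 : ℝ) else 0 := by
  simp only [Pi.sub_apply, Pi.single_apply]
  by_cases h1 : i = u <;> by_cases h2 : i = v <;> by_cases h3 : j = u <;>
    by_cases h4 : j = v <;> simp_all

/-- The Laplacian of `G + uv` is `L + wwᵀ` for `w = 1_u - 1_v`. -/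
lemma lap_add [DecidableEq V] (G : SimpleGraph V) [DecidableRel G.Adj]
    (u v : V) (huv : u ≠ v) (hnadj : ¬ G.Adj u v)
    [DecidableRel (G ⊔ SimpleGraph.fromEdgeSet {s(u, v)}).Adj] :
    (G ⊔ SimpleGraph.fromEdgeSet {s(u, v)}).lapMatrix ℝ =
      G.lapMatrix ℝ + vecMulVec ((Pi.single u 1 : V → ℝ) - (Pi.single v 1 : V → ℝ))
        ((Pi.single u 1 : V → ℝ) - (Pi.single v 1 : V → ℝ)) := by
  have hoff : ∀ i j : V, i ≠ j →
      (G ⊔ SimpleGraph.fromEdgeSet {s(u, v)}).lapMatrix ℝ i j =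
        G.lapMatrix ℝ i j +
          vecMulVec ((Pi.single u 1 : V → ℝ) - (Pi.single v 1 : V → ℝ))
            ((Pi.single u 1 : V → ℝ) - (Pi.single v 1 : V → ℝ)) i j := by
    intro i j hij
    have hadj : (G ⊔ SimpleGraph.fromEdgeSet {s(u, v)}).Adj i j ↔
        G.Adj i j ∨ ((i = u ∧ j = v) ∨ (i = v ∧ j = u)) := by
      constructor
      · intro h
        rcases h with h | h
        · exact Or.inl h
        · rw [SimpleGraph.fromEdgeSet_adj] at h
          refine Or.inr ?_
          have := h.1
          simp only [Set.mem_singleton_iff, Sym2.eq_iff] at this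
          tauto
      · intro h
        rcases h with h | h
        · exact Or.inl h
        · refine Or.inr ?_
          rw [SimpleGraph.fromEdgeSet_adj]
          constructor
          · simp only [Set.mem_singleton_iff, Sym2.eq_iff]; tauto
          · exact hij
    simp only [SimpleGraph.lapMatrix, SimpleGraph.degMatrix, Matrix.sub_apply,
      Matrix.add_apply, Matrix.diagonal_apply_ne _ hij, SimpleGraph.adjMatrix_apply,
      vecMulVec_apply, wprod u v i j hij]
    by_cases hpair : (i = u ∧ j = v) ∨ (i = v ∧ j = u)
    · have hga : ¬ G.Adj i j := by
        rcases hpair with ⟨rfl, rfl⟩ | ⟨rfl, rfl⟩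
        · exact hnadj
        · exact fun h => hnadj h.symm
      rw [if_pos (hadj.mpr (Or.inr hpair)), if_neg hga, if_pos hpair]
      ring
    · rw [if_neg hpair]
      by_cases hga : G.Adj i j
      · rw [if_pos (hadj.mpr (Or.inl hga)), if_pos hga]; ring
      · rw [if_neg (fun h => by rcases hadj.mp h with h | h; exacts [hga h, hpair h]),
          if_neg hga]; ring
  ext i j
  by_cases hij : i = j
  · subst hij
    have h1 : (G ⊔ SimpleGraph.fromEdgeSet {s(u, v)}).lapMatrix ℝ *ᵥ (fun _ => 1) = 0 :=
      SimpleGraph.lapMatrix_mulVec_const_eq_zero _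
    have h2 : (G.lapMatrix ℝ +
        vecMulVec ((Pi.single u 1 : V → ℝ) - (Pi.single v 1 : V → ℝ))
          ((Pi.single u 1 : V → ℝ) - (Pi.single v 1 : V → ℝ))) *ᵥ (fun _ => 1) = 0 := by
      rw [Matrix.add_mulVec, SimpleGraph.lapMatrix_mulVec_const_eq_zero,
        myVecMulVec_mulVec, wsum_zero]
      simp
    rw [diag_of_rowsum _ h1 i, diag_of_rowsum _ h2 i]
    congr 1
    exact Finset.sum_congr rfl fun j hj => hoff i j (Ne.symm (Finset.ne_of_mem_erase hj))
  · rw [Matrix.add_apply]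
    exact hoff i j hij

/-- If `x` sums to zero, then `P L x = x` for `L` the Laplacian of a connected graph
and `P` its pseudoinverse. -/
lemma proj_fix [DecidableEq V] (G : SimpleGraph V) [DecidableRel G.Adj]
    (hG : G.Connected) {P : Matrix V V ℝ} (hP : IsMoorePenroseInv (G.lapMatrix ℝ) P)
    (x : V → ℝ) (hx : x ⬝ᵥ (fun _ => (1:ℝ)) = 0) :
    (P * G.lapMatrix ℝ) *ᵥ x = x := by
  set L := G.lapMatrix ℝ with hL
  set E : Matrix V V ℝ := 1 - P * L with hE
  have hker : ∀ y : V → ℝ, ∀ i j : V, (E *ᵥ y) i = (E *ᵥ y) j := by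
    intro y i j
    have hLE : L * E = 0 := by
      rw [hE, mul_sub, mul_one, ← Matrix.mul_assoc, hP.1, sub_self]
    have h0 : L *ᵥ (E *ᵥ y) = 0 := by
      rw [mulVec_mulVec, hLE, zero_mulVec]
    have := (G.lapMatrix_mulVec_eq_zero_iff_forall_reachable (x := E *ᵥ y)).mp (by
      exact h0)
    exact this i j (hG.preconnected i j)
  have hEs : Eᵀ = E := by
    rw [hE, transpose_sub, transpose_one, hP.2.2.2]
  have hzero : E *ᵥ x = 0 := by
    haveI hne : Nonempty V := hG.nonempty
    obtain ⟨i₀⟩ := hne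
    have hsum : ∑ i : V, (E *ᵥ x) i = (fun _ => (1:ℝ)) ⬝ᵥ (E *ᵥ x) := by
      simp [dotProduct]
    have h2 : (fun _ => (1:ℝ)) ⬝ᵥ (E *ᵥ x) = (E *ᵥ (fun _ => (1:ℝ))) ⬝ᵥ x := by
      rw [dotProduct_mulVec, ← mulVec_transpose, hEs]
    have h3 : (E *ᵥ (fun _ => (1:ℝ))) ⬝ᵥ x = 0 := by
      have hc : ∀ j, (E *ᵥ (fun _ => (1:ℝ))) j = (E *ᵥ (fun _ => (1:ℝ))) i₀ :=
        fun j => hker _ j i₀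
      calc (E *ᵥ (fun _ => (1:ℝ))) ⬝ᵥ x = ∑ j, (E *ᵥ (fun _ => (1:ℝ))) j * x j := rfl
      _ = ∑ j, (E *ᵥ (fun _ => (1:ℝ))) i₀ * x j := by
          exact Finset.sum_congr rfl fun j _ => by rw [hc j]
      _ = (E *ᵥ (fun _ => (1:ℝ))) i₀ * ∑ j, x j := by rw [Finset.mul_sum]
      _ = 0 := by
          have : ∑ j, x j = 0 := by simpa [dotProduct] using hx
          rw [this, mul_zero]
    have hS : ∑ i : V, (E *ᵥ x) i = 0 := by rw [hsum, h2, h3]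
    have hcst : ∑ i : V, (E *ᵥ x) i = (Fintype.card V : ℝ) * (E *ᵥ x) i₀ := by
      rw [Finset.sum_congr rfl fun j _ => hker x j i₀]
      simp [Finset.sum_const, card_univ, mul_comm]
    have hi0 : (E *ᵥ x) i₀ = 0 := by
      have hcard : (0:ℝ) < (Fintype.card V : ℝ) := by
        have : 0 < Fintype.card V := Fintype.card_pos_iff.mpr ⟨i₀⟩
        exact_mod_cast this
      have := hS
      rw [hcst] at this
      exact by nlinarith
    ext i
    rw [hker x i i₀, hi0]; rfl
  have h4 : x - (P * L) *ᵥ x = 0 := by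
    rw [← hzero, hE, sub_mulVec, one_mulVec]
  linear_combination (norm := module) -h4

/-- Sherman–Morrison-type formula for the pseudoinverse of `L + W`. -/
lemma sm_isMP [DecidableEq V] (L K W : Matrix V V ℝ) (R : ℝ) (hr : (1:ℝ) + R ≠ 0)
    (hLs : Lᵀ = L) (hWs : Wᵀ = W)
    (hK : IsMoorePenroseInv L K)
    (hLKW : L * (K * W) = W) (hWKW : W * K * W = R • W) :
    IsMoorePenroseInv (L + W) (K - ((1:ℝ) + R)⁻¹ • (K * W * K)) := by
  have hKs : Kᵀ = K := mp_transpose_symm hLs hK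
  have hcomm : L * K = K * L := mp_comm hLs hK
  have hWKL : W * (K * L) = W := by
    have h := congrArg Matrix.transpose hLKW
    rw [transpose_mul, transpose_mul, hKs, hWs, hLs] at h
    rw [← mul_assoc]; exact h
  set c : ℝ := ((1:ℝ) + R)⁻¹ with hc
  have hc1 : c + c * R = 1 := by
    rw [hc]; field_simp
  have key1 : L * (K * W * K) = W * K := by
    calc L * (K * W * K) = (L * (K * W)) * K := by noncomm_ring
    _ = W * K := by rw [hLKW]
  have key2 : W * (K * W * K) = R • (W * K) := by
    calc W * (K * W * K) = (W * K * W) * K := by noncomm_ring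
    _ = (R • W) * K := by rw [hWKW]
    _ = R • (W * K) := by rw [smul_mul_assoc]
  have hLP : (L + W) * (K - c • (K * W * K)) = L * K := by
    have expand : (L + W) * (K - c • (K * W * K)) =
        L * K + W * K - c • (L * (K * W * K)) - c • (W * (K * W * K)) := by
      simp only [mul_sub, add_mul, Matrix.mul_smul]
      abel
    rw [expand, key1, key2, smul_smul]
    calc L * K + W * K - c • (W * K) - (c * R) • (W * K)
        = L * K + W * K - (c • (W * K) + (c * R) • (W * K)) := by abel
    _ = L * K + W * K - (c + c * R) • (W * K) := by rw [add_smul]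
    _ = L * K + W * K - (1:ℝ) • (W * K) := by rw [hc1]
    _ = L * K := by rw [one_smul]; abel
  have key3 : (K * W * K) * L = K * W := by
    calc (K * W * K) * L = K * (W * (K * L)) := by noncomm_ring
    _ = K * W := by rw [hWKL]
  have key4 : (K * W * K) * W = R • (K * W) := by
    calc (K * W * K) * W = K * (W * K * W) := by noncomm_ring
    _ = K * (R • W) := by rw [hWKW]
    _ = R • (K * W) := by rw [Matrix.mul_smul]
  have hPL : (K - c • (K * W * K)) * (L + W) = K * L := by
    have expand : (K - c • (K * W * K)) * (L + W) =
        K * L + K * W - c • ((K * W * K) * L) - c • ((K * W * K) * W) := by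
      simp only [sub_mul, mul_add, Matrix.smul_mul]
      abel
    rw [expand, key3, key4, smul_smul]
    calc K * L + K * W - c • (K * W) - (c * R) • (K * W)
        = K * L + K * W - (c • (K * W) + (c * R) • (K * W)) := by abel
    _ = K * L + K * W - (c + c * R) • (K * W) := by rw [add_smul]
    _ = K * L + K * W - (1:ℝ) • (K * W) := by rw [hc1]
    _ = K * L := by rw [one_smul]; abel
  refine ⟨?_, ?_, ?_, ?_⟩
  · rw [hLP, mul_add]
    have h1 : L * K * L = L := hK.1
    have h2 : L * K * W = W := by rw [mul_assoc]; exact hLKW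
    rw [h1, h2]
  · calc (K - c • (K * W * K)) * (L + W) * (K - c • (K * W * K))
        = (K * L) * (K - c • (K * W * K)) := by rw [hPL]
    _ = (K * L) * K - c • ((K * L) * (K * W * K)) := by
        rw [mul_sub, Matrix.mul_smul]
    _ = K - c • (K * W * K) := by
        have e2 : (K * L) * (K * W * K) = K * W * K := by
          calc (K * L) * (K * W * K) = ((K * L) * K) * (W * K) := by noncomm_ring
          _ = K * (W * K) := by rw [hK.2.1]
          _ = K * W * K := by rw [mul_assoc]
        rw [hK.2.1, e2]
  · rw [hLP, transpose_mul, hKs, hLs, ← hcomm]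
  · rw [hPL, transpose_mul, hKs, hLs, hcomm]

end Aux

lemma quad_expand [Fintype V] [DecidableEq V] (M : Matrix V V ℝ) (a b : V) :
    ((Pi.single a 1 : V → ℝ) - (Pi.single b 1 : V → ℝ)) ⬝ᵥ
      M *ᵥ ((Pi.single a 1 : V → ℝ) - (Pi.single b 1 : V → ℝ)) =
    M a a + M b b - M a b - M b a := by
  simp [mulVec_sub, sub_dotProduct, dotProduct_sub, mulVec_single, single_dotProduct]
  ring

lemma totalRes_eq_trace [Fintype V] [DecidableEq V] (M P : Matrix V V ℝ) (hMs : Mᵀ = M)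
    (h1 : M *ᵥ (fun _ => 1) = 0) (hP : IsMoorePenroseInv M P) :
    totalRes P = (Fintype.card V : ℝ) * trace P := by
  have hPs := mp_transpose_symm hMs hP
  have hP1 : P *ᵥ (fun _ => 1) = 0 := by
    conv_lhs => rw [mp_eq_sq_mul hMs hP]
    rw [← mulVec_mulVec, h1, mulVec_zero]
  have hrow : ∀ a : V, ∑ b : V, P a b = 0 := by
    intro a
    have := congrFun hP1 a
    simpa [mulVec, dotProduct] using this
  have hcol : ∀ a : V, ∑ b : V, P b a = 0 := by
    intro a
    rw [← hrow a]
    exact Finset.sum_congr rfl fun b _ => (congrFun (congrFun hPs b) a).symm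
  have htr : ∑ b : V, P b b = trace P := rfl
  unfold totalRes
  have hexp : ∀ a b : V, effRes P a b = P a a + P b b - P a b - P b a :=
    fun a b => quad_expand P a b
  calc (∑ a : V, ∑ b : V, effRes P a b) / 2
      = (∑ a : V, ∑ b : V, (P a a + P b b - P a b - P b a)) / 2 := by
        simp only [hexp]
    _ = (∑ a : V, ((Fintype.card V : ℝ) * P a a + trace P)) / 2 := by
        congr 1
        refine Finset.sum_congr rfl fun a _ => ?_
        rw [Finset.sum_sub_distrib, Finset.sum_sub_distrib, Finset.sum_add_distrib,
          Finset.sum_const, hrow a, hcol a, htr, card_univ]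
        simp [nsmul_eq_mul]
    _ = ((Fintype.card V : ℝ) * trace P + (Fintype.card V : ℝ) * trace P) / 2 := by
        rw [Finset.sum_add_distrib, Finset.sum_const, ← Finset.mul_sum, htr, card_univ,
          nsmul_eq_mul]
    _ = (Fintype.card V : ℝ) * trace P := by ring

/-- Black et al., GTR: adding the edge `(u,v)` to a connected graph
`G` on `n` vertices drops the total effective resistance by exactly
`R_tot(G) − R_tot(G + uv) = n · B_{u,v}² / (1 + R_{u,v})`. -/
theorem totalRes_drop_of_addEdge
    [Fintype V] [DecidableEq V] (G : SimpleGraph V) [DecidableRel G.Adj]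
    (hG : G.Connected) (u v : V) (huv : u ≠ v) (hnadj : ¬ G.Adj u v)
    [DecidableRel (G ⊔ SimpleGraph.fromEdgeSet {s(u, v)}).Adj]
    (Lp Lp' : Matrix V V ℝ)
    (hLp : IsMoorePenroseInv (G.lapMatrix ℝ) Lp)
    (hLp' : IsMoorePenroseInv
      ((G ⊔ SimpleGraph.fromEdgeSet {s(u, v)}).lapMatrix ℝ) Lp') :
    totalRes Lp - totalRes Lp' =
      (Fintype.card V : ℝ) * biharmSq Lp u v / (1 + effRes Lp u v) := by
  set L : Matrix V V ℝ := G.lapMatrix ℝ with hLdef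
  set w : V → ℝ := (Pi.single u 1 : V → ℝ) - (Pi.single v 1 : V → ℝ) with hwdef
  set W : Matrix V V ℝ := vecMulVec w w with hWdef
  set R : ℝ := effRes Lp u v with hRdef
  have hLs : Lᵀ = L := (G.isSymm_lapMatrix (R := ℝ))
  have hWs : Wᵀ = W := myVecMulVec_trans w w
  have hKs : Lpᵀ = Lp := mp_transpose_symm hLs hLp
  have hR : R = w ⬝ᵥ Lp *ᵥ w := rfl
  have hRnonneg : 0 ≤ R := by
    have hre : R = (Lp *ᵥ w) ⬝ᵥ (L *ᵥ (Lp *ᵥ w)) := by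
      calc R = w ⬝ᵥ Lp *ᵥ w := rfl
      _ = w ⬝ᵥ ((Lp * L * Lp) *ᵥ w) := by rw [hLp.2.1]
      _ = w ⬝ᵥ (Lp *ᵥ (L *ᵥ (Lp *ᵥ w))) := by rw [mulVec_mulVec, mulVec_mulVec]
      _ = (w ᵥ* Lp) ⬝ᵥ (L *ᵥ (Lp *ᵥ w)) := by rw [dotProduct_mulVec]
      _ = (Lp *ᵥ w) ⬝ᵥ (L *ᵥ (Lp *ᵥ w)) := by rw [← mulVec_transpose, hKs]
    rw [hre]
    have := (SimpleGraph.posSemidef_lapMatrix ℝ G).dotProduct_mulVec_nonneg (Lp *ᵥ w)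
    simpa using this
  have hr : (1:ℝ) + R ≠ 0 := by positivity
  have hwsum : w ⬝ᵥ (fun _ => (1:ℝ)) = 0 := wsum_zero
  have hfix : (Lp * L) *ᵥ w = w := proj_fix G hG hLp w hwsum
  have hLKW : L * (Lp * W) = W := by
    rw [← mul_assoc, mp_comm hLs hLp, hWdef, myMul_vecMulVec, hfix]
  have hWKW : W * Lp * W = R • W := by
    rw [mul_assoc, hWdef, myMul_vecMulVec, myVecMulVec_mul_vecMulVec, ← hR]
  have hsm : IsMoorePenroseInv (L + W) (Lp - ((1:ℝ) + R)⁻¹ • (Lp * W * Lp)) :=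
    sm_isMP L Lp W R hr hLs hWs hLp hLKW hWKW
  have hlap : (G ⊔ SimpleGraph.fromEdgeSet {s(u, v)}).lapMatrix ℝ = L + W :=
    lap_add G u v huv hnadj
  have hLp'eq : Lp' = Lp - ((1:ℝ) + R)⁻¹ • (Lp * W * Lp) := by
    refine mp_unique ?_ hsm
    rw [← hlap]
    exact hLp'
  have hB : trace (Lp * W * Lp) = biharmSq Lp u v := by
    calc trace (Lp * W * Lp) = trace (Lp * (Lp * W)) := trace_mul_comm (Lp * W) Lp
    _ = trace ((Lp * Lp) * W) := by rw [← mul_assoc]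
    _ = trace (vecMulVec ((Lp * Lp) *ᵥ w) w) := by rw [hWdef, myMul_vecMulVec]
    _ = ((Lp * Lp) *ᵥ w) ⬝ᵥ w := myTrace_vecMulVec _ _
    _ = w ⬝ᵥ ((Lp * Lp) *ᵥ w) := dotProduct_comm _ _
    _ = biharmSq Lp u v := rfl
  have htr' : trace Lp' = trace Lp - ((1:ℝ) + R)⁻¹ * biharmSq Lp u v := by
    rw [hLp'eq, trace_sub, trace_smul, hB, smul_eq_mul]
  have tot : totalRes Lp = (Fintype.card V : ℝ) * trace Lp :=
    totalRes_eq_trace L Lp hLs (G.lapMatrix_mulVec_const_eq_zero) hLp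
  have tot' : totalRes Lp' = (Fintype.card V : ℝ) * trace Lp' := by
    refine totalRes_eq_trace ((G ⊔ SimpleGraph.fromEdgeSet {s(u, v)}).lapMatrix ℝ) Lp'
      (SimpleGraph.isSymm_lapMatrix _ _) ?_ hLp'
    exact SimpleGraph.lapMatrix_mulVec_const_eq_zero _
  rw [tot, tot', htr']
  field_simp
  ring
end

section
/- Let G be a connected simple graph. For every pair of distinct vertices u, v, the effective resistance satisfies the Lovász bound | R_{u,v} − (1/d_u + 1/d_v) | ≤ (1/λ_1) · (2/d_min), where λ_1 is the smallest non-zero eigenvalue of the normalized Laplacian of G and d_min is the minimum degree of G. -/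
open Matrix Finset

variable {V : Type*}

/-- The normalized Laplacian `L = I − D^{-1/2} A D^{-1/2}` of a graph. -/
noncomputable def normLap [Fintype V] [DecidableEq V]
    (G : SimpleGraph V) [DecidableRel G.Adj] : Matrix V V ℝ :=
  1 - Matrix.of fun i j =>
    (Real.sqrt (G.degree i : ℝ))⁻¹ * (G.adjMatrix ℝ) i j *
      (Real.sqrt (G.degree j : ℝ))⁻¹

section Aux

variable [Fintype V] [DecidableEq V]

lemma sum_dotProduct' {ι : Type*} (s : Finset ι) (g : ι → V → ℝ) (w : V → ℝ) :
    (∑ i ∈ s, g i) ⬝ᵥ w = ∑ i ∈ s, g i ⬝ᵥ w := by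
  simp only [dotProduct, Finset.sum_apply, Finset.sum_mul]
  exact Finset.sum_comm

lemma dotProduct_sum' {ι : Type*} (s : Finset ι) (w : V → ℝ) (g : ι → V → ℝ) :
    w ⬝ᵥ (∑ i ∈ s, g i) = ∑ i ∈ s, w ⬝ᵥ g i := by
  simp only [dotProduct, Finset.sum_apply, Finset.mul_sum]
  exact Finset.sum_comm

lemma dot_diag_comm (d x y : V → ℝ) :
    x ⬝ᵥ (Matrix.diagonal d *ᵥ y) = (Matrix.diagonal d *ᵥ x) ⬝ᵥ y := by
  simp only [dotProduct, mulVec_diagonal]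
  exact Finset.sum_congr rfl fun i _ => by ring

lemma spectral_bound (N M : Matrix V V ℝ) (hN : N.IsHermitian)
    (hpsd : ∀ x : V → ℝ, 0 ≤ x ⬝ᵥ (N *ᵥ x))
    (htwo : ∀ x : V → ℝ, x ⬝ᵥ (N *ᵥ x) ≤ 2 * (x ⬝ᵥ x))
    (lam : ℝ) (hlam : 0 < lam)
    (hmin : ∀ t : ℝ, (∃ x : V → ℝ, x ≠ 0 ∧ N *ᵥ x = t • x) → t ≠ 0 → lam ≤ t)
    (hM : N * M * N = N)
    (f : V → ℝ) (hker : ∀ x : V → ℝ, N *ᵥ x = 0 → f ⬝ᵥ x = 0) :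
    |f ⬝ᵥ (M *ᵥ f) - f ⬝ᵥ f| ≤ (1 / lam) * (f ⬝ᵥ f) := by
  classical
  set b := hN.eigenvectorBasis with hbdef
  set μ := hN.eigenvalues with hμdef
  set β : V → (V → ℝ) := fun i => ⇑(b i) with hβ
  have hbe : ∀ i, N *ᵥ β i = μ i • β i := fun i => hN.mulVec_eigenvectorBasis i
  have hbo : ∀ i j, β i ⬝ᵥ β j = if i = j then 1 else 0 := by
    intro i j
    have := orthonormal_iff_ite.mp b.orthonormal (i := i) (j := j)
    simpa [hβ, PiLp.inner_apply, RCLike.inner_apply, dotProduct, mul_comm] using this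
  have hbnorm : ∀ i, β i ⬝ᵥ β i = 1 := fun i => by simp [hbo]
  have hμ0 : ∀ i, 0 ≤ μ i := by
    intro i
    have h := hpsd (β i)
    rwa [hbe i, dotProduct_smul, hbnorm i, smul_eq_mul, mul_one] at h
  have hμ2 : ∀ i, μ i ≤ 2 := by
    intro i
    have h := htwo (β i)
    rwa [hbe i, dotProduct_smul, hbnorm i, smul_eq_mul, mul_one, mul_one] at h
  have hbne : ∀ i, β i ≠ 0 := by
    intro i h0
    have := hbnorm i
    rw [h0] at this
    simpa using this
  have hμlam : ∀ i, μ i ≠ 0 → lam ≤ μ i := fun i hne =>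
    hmin (μ i) ⟨β i, hbne i, hbe i⟩ hne
  set c : V → ℝ := fun i => if μ i = 0 then 0 else (β i ⬝ᵥ f) / μ i with hc
  set h : V → ℝ := ∑ i, c i • β i with hh
  have hNh : N *ᵥ h = ∑ i, (c i * μ i) • β i := by
    rw [hh, ← Matrix.mulVecLin_apply, map_sum]
    refine Finset.sum_congr rfl fun i _ => ?_
    rw [LinearMap.map_smul, Matrix.mulVecLin_apply, hbe, smul_smul]
  have hexp : f = ∑ i, (β i ⬝ᵥ f) • β i := by
    have h0 := b.sum_repr' (WithLp.toLp 2 f)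
    have heq : ∀ i, (inner (𝕜 := ℝ) (b i) (WithLp.toLp 2 f)) = β i ⬝ᵥ f := by
      intro i
      simp only [hβ]
      simp [PiLp.inner_apply, RCLike.inner_apply, dotProduct, mul_comm]
    calc f = ∑ i, (inner (𝕜 := ℝ) (b i) (WithLp.toLp 2 f)) • β i := by
          have := congrArg (WithLp.ofLp (p := 2)) h0
          rw [WithLp.ofLp_sum] at this
          simpa [hβ] using this.symm
      _ = _ := Finset.sum_congr rfl fun i _ => by rw [heq]
  have hfc : ∀ i, μ i = 0 → (β i ⬝ᵥ f) = 0 := by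
    intro i h0
    have hz : N *ᵥ β i = 0 := by rw [hbe, h0, zero_smul]
    have := hker _ hz
    rwa [dotProduct_comm] at this
  have hNhf : N *ᵥ h = f := by
    rw [hNh]
    conv_rhs => rw [hexp]
    refine Finset.sum_congr rfl fun i _ => ?_
    by_cases h0 : μ i = 0
    · rw [hc]; simp [h0, hfc i h0]
    · rw [hc]; simp only [h0, if_false]; rw [div_mul_cancel₀ _ h0]
  have hdot : ∀ p q : V → ℝ,
      (∑ i, p i • β i) ⬝ᵥ (∑ j, q j • β j) = ∑ i, p i * q i := by
    intro p q
    rw [sum_dotProduct']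
    refine Finset.sum_congr rfl fun i _ => ?_
    rw [smul_dotProduct, dotProduct_sum']
    simp [dotProduct_smul, hbo, mul_ite]
  have hS1 : h ⬝ᵥ (N *ᵥ h) = ∑ i, μ i * c i ^ 2 := by
    rw [hNh, hh, hdot]
    exact Finset.sum_congr rfl fun i _ => by ring
  have hS2 : f ⬝ᵥ f = ∑ i, (μ i) ^ 2 * c i ^ 2 := by
    conv_lhs => rw [← hNhf, hNh]
    rw [hdot]
    exact Finset.sum_congr rfl fun i _ => by ring
  have hNs : Nᵀ = N := by
    have := hN.eq
    rwa [conjTranspose_eq_transpose_of_trivial] at this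
  have hswap : ∀ x z : V → ℝ, (N *ᵥ x) ⬝ᵥ z = x ⬝ᵥ (N *ᵥ z) := by
    intro x z
    rw [dotProduct_mulVec]
    congr 1
    rw [← mulVec_transpose, hNs]
  have hRf : f ⬝ᵥ (M *ᵥ f) = h ⬝ᵥ (N *ᵥ h) := by
    conv_lhs => rw [← hNhf]
    rw [mulVec_mulVec, hswap, mulVec_mulVec, ← Matrix.mul_assoc, hM]
  rw [hRf, hS1, hS2, ← Finset.sum_sub_distrib]
  refine (Finset.abs_sum_le_sum_abs _ _).trans ?_
  rw [Finset.mul_sum]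
  refine Finset.sum_le_sum fun i _ => ?_
  by_cases h0 : μ i = 0
  · simp [h0]
  · have h1 : lam ≤ μ i := hμlam i h0
    have h2' : μ i ≤ 2 := hμ2 i
    have h3 : 0 ≤ μ i := hμ0 i
    have e1 : |μ i * c i ^ 2 - μ i ^ 2 * c i ^ 2| = |μ i - μ i ^ 2| * c i ^ 2 := by
      rw [← sub_mul, abs_mul, abs_of_nonneg (sq_nonneg (c i))]
    rw [e1]
    have habs : |μ i - μ i ^ 2| ≤ (1 / lam) * μ i ^ 2 := by
      have e2 : μ i - μ i ^ 2 = μ i * (1 - μ i) := by ring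
      rw [e2, abs_mul, abs_of_nonneg h3]
      have h4 : |1 - μ i| ≤ 1 := abs_le.mpr ⟨by linarith, by linarith⟩
      calc μ i * |1 - μ i| ≤ μ i * 1 := mul_le_mul_of_nonneg_left h4 h3
        _ = μ i := mul_one _
        _ ≤ (1 / lam) * μ i ^ 2 := by
          rw [div_mul_eq_mul_div, one_mul, le_div_iff₀ hlam]
          nlinarith
    calc |μ i - μ i ^ 2| * c i ^ 2 ≤ ((1 / lam) * μ i ^ 2) * c i ^ 2 :=
        mul_le_mul_of_nonneg_right habs (sq_nonneg _)
      _ = 1 / lam * (μ i ^ 2 * c i ^ 2) := by ring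

lemma signless_psd (G : SimpleGraph V) [DecidableRel G.Adj] (y : V → ℝ) :
    0 ≤ y ⬝ᵥ ((G.degMatrix ℝ + G.adjMatrix ℝ) *ᵥ y) := by
  have expand : y ⬝ᵥ ((G.degMatrix ℝ + G.adjMatrix ℝ) *ᵥ y) =
      (∑ i : V, ∑ j : V, if G.Adj i j then (y i + y j) ^ 2 else 0) / 2 := by
    simp_rw [add_mulVec, dotProduct_add, SimpleGraph.dotProduct_mulVec_degMatrix,
      SimpleGraph.dotProduct_mulVec_adjMatrix, SimpleGraph.degree_eq_sum_if_adj,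
      sum_mul, ite_mul, one_mul, zero_mul, ← sum_add_distrib, ite_add_ite, add_zero]
    rw [← add_self_div_two (∑ i : V, ∑ j : V, _)]
    conv_lhs => enter [1, 2, 2, i, 2, j]; rw [if_congr (G.adj_comm i j) rfl rfl]
    conv_lhs => enter [1, 2]; rw [Finset.sum_comm]
    simp_rw [← sum_add_distrib, ite_add_ite]
    congr 2 with i
    congr 2 with j
    ring_nf
  rw [expand]
  positivity

lemma exists_adj_of_walk (G : SimpleGraph V) {a c : V} (p : G.Walk a c) (hac : a ≠ c) :
    ∃ d, G.Adj a d := by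
  induction p with
  | nil => exact absurd rfl hac
  | cons h p ih => exact ⟨_, h⟩

end Aux

/-- Lovász bound: for a connected simple graph, distinct vertices
`u, v`, smallest non-zero normalized-Laplacian eigenvalue `λ₁` and minimum degree
`d_min`, `|R_{u,v} − (1/d_u + 1/d_v)| ≤ (1/λ₁)·(2/d_min)`. -/
theorem lovasz_effective_resistance_bound
    [Fintype V] [DecidableEq V] (G : SimpleGraph V) [DecidableRel G.Adj]
    (hG : G.Connected) (u v : V) (huv : u ≠ v)
    (Lp : Matrix V V ℝ) (hLp : IsMoorePenroseInv (G.lapMatrix ℝ) Lp)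
    (lam : ℝ)
    (hlam_eig : ∃ x : V → ℝ, x ≠ 0 ∧ (normLap G).mulVec x = lam • x)
    (hlam_ne : lam ≠ 0)
    (hlam_min : ∀ t : ℝ, (∃ x : V → ℝ, x ≠ 0 ∧ (normLap G).mulVec x = t • x) →
      t ≠ 0 → lam ≤ t)
    (dmin : ℝ)
    (hdmin_le : ∀ w : V, dmin ≤ (G.degree w : ℝ))
    (hdmin_mem : ∃ w : V, (G.degree w : ℝ) = dmin) :
    |effRes Lp u v - (1 / (G.degree u : ℝ) + 1 / (G.degree v : ℝ))| ≤
      (1 / lam) * (2 / dmin) := by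
  classical
  have hnt : Nontrivial V := ⟨⟨u, v, huv⟩⟩
  have hdeg : ∀ w : V, 0 < (G.degree w : ℝ) := by
    intro w
    obtain ⟨w', hw'⟩ := exists_ne w
    obtain ⟨p⟩ := hG.preconnected w w'
    obtain ⟨d, hd⟩ := exists_adj_of_walk G p (Ne.symm hw')
    exact_mod_cast (G.degree_pos_iff_exists_adj w).mpr ⟨d, hd⟩
  set s : V → ℝ := fun w => (Real.sqrt (G.degree w : ℝ))⁻¹ with hs
  have hsqrt_pos : ∀ w, 0 < Real.sqrt (G.degree w : ℝ) := fun w => Real.sqrt_pos.mpr (hdeg w)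
  have hs_pos : ∀ w, 0 < s w := fun w => inv_pos.mpr (hsqrt_pos w)
  have hs_mul : ∀ w, s w * Real.sqrt (G.degree w : ℝ) = 1 := fun w =>
    inv_mul_cancel₀ (hsqrt_pos w).ne'
  have hs_sq : ∀ w, s w * s w = ((G.degree w : ℝ))⁻¹ := by
    intro w
    rw [hs, ← mul_inv, Real.mul_self_sqrt (hdeg w).le]
  have hssd : ∀ w, s w * s w * (G.degree w : ℝ) = 1 := fun w => by
    rw [hs_sq w]; exact inv_mul_cancel₀ (hdeg w).ne'
  set S : Matrix V V ℝ := Matrix.diagonal s with hS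
  set D2 : Matrix V V ℝ := Matrix.diagonal (fun w => Real.sqrt (G.degree w : ℝ)) with hD2
  have hSD2 : S * D2 = 1 := by
    rw [hS, hD2, diagonal_mul_diagonal]
    have : (fun w => s w * Real.sqrt (G.degree w : ℝ)) = fun _ => (1 : ℝ) :=
      funext fun w => hs_mul w
    rw [this, Matrix.diagonal_one]
  have hD2S : D2 * S = 1 := by
    rw [hS, hD2, diagonal_mul_diagonal]
    have : (fun w => Real.sqrt (G.degree w : ℝ) * s w) = fun _ => (1 : ℝ) :=
      funext fun w => by rw [mul_comm]; exact hs_mul w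
    rw [this, Matrix.diagonal_one]
  set L := G.lapMatrix ℝ with hL
  set N := normLap G with hNdef
  have hNSLS : N = S * L * S := by
    rw [hNdef, hS, hL]
    ext i j
    rw [Matrix.mul_diagonal, Matrix.diagonal_mul]
    by_cases hij : i = j
    · subst hij
      simp [normLap, SimpleGraph.lapMatrix, SimpleGraph.degMatrix]
      linear_combination -hssd i
    · simp [normLap, SimpleGraph.lapMatrix, SimpleGraph.degMatrix, Matrix.one_apply_ne hij,
        Matrix.diagonal_apply_ne _ hij]
      rfl
  have hLher : L.IsHermitian := (SimpleGraph.posSemidef_lapMatrix ℝ G).1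
  have hN : N.IsHermitian := by
    rw [hNSLS]
    have hSh : S.IsHermitian := by rw [hS]; exact Matrix.isHermitian_diagonal s
    show (S * L * S)ᴴ = S * L * S
    rw [Matrix.conjTranspose_mul, Matrix.conjTranspose_mul, hSh.eq, hLher.eq, Matrix.mul_assoc]
  have hquad : ∀ x : V → ℝ, x ⬝ᵥ (N *ᵥ x) = (S *ᵥ x) ⬝ᵥ (L *ᵥ (S *ᵥ x)) := by
    intro x
    rw [hNSLS, ← mulVec_mulVec, ← mulVec_mulVec]
    conv_lhs => rw [hS, dot_diag_comm]
  have hpsd : ∀ x : V → ℝ, 0 ≤ x ⬝ᵥ (N *ᵥ x) := by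
    intro x
    rw [hquad]
    have := (SimpleGraph.posSemidef_lapMatrix ℝ G).dotProduct_mulVec_nonneg (S *ᵥ x)
    simpa [hL] using this
  have htwo : ∀ x : V → ℝ, x ⬝ᵥ (N *ᵥ x) ≤ 2 * (x ⬝ᵥ x) := by
    intro x
    set y := S *ᵥ x with hy
    have h1 : 0 ≤ y ⬝ᵥ ((G.degMatrix ℝ + G.adjMatrix ℝ) *ᵥ y) := signless_psd G y
    have hyD : y ⬝ᵥ ((G.degMatrix ℝ) *ᵥ y) = x ⬝ᵥ x := by
      rw [hy, hS]
      simp only [SimpleGraph.degMatrix, dotProduct, mulVec_diagonal]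
      refine Finset.sum_congr rfl fun w _ => ?_
      linear_combination (x w * x w) * hssd w
    have hLsplit : y ⬝ᵥ (L *ᵥ y) = y ⬝ᵥ ((G.degMatrix ℝ) *ᵥ y) - y ⬝ᵥ ((G.adjMatrix ℝ) *ᵥ y) := by
      rw [hL, SimpleGraph.lapMatrix, sub_mulVec, dotProduct_sub]
    have hsum : y ⬝ᵥ ((G.degMatrix ℝ + G.adjMatrix ℝ) *ᵥ y) =
        y ⬝ᵥ ((G.degMatrix ℝ) *ᵥ y) + y ⬝ᵥ ((G.adjMatrix ℝ) *ᵥ y) := by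
      rw [add_mulVec, dotProduct_add]
    rw [hquad x, ← hy, hLsplit, hyD]
    rw [hsum, hyD] at h1
    linarith
  have hlam_pos : 0 < lam := by
    obtain ⟨x, hx0, hxe⟩ := hlam_eig
    have h1 : x ⬝ᵥ (N *ᵥ x) = lam * (x ⬝ᵥ x) := by
      show x ⬝ᵥ (N.mulVec x) = _
      rw [hxe, dotProduct_smul, smul_eq_mul]
    have hnn : 0 ≤ x ⬝ᵥ x := Finset.sum_nonneg fun i _ => mul_self_nonneg _
    have hne : x ⬝ᵥ x ≠ 0 := fun hc => hx0 (dotProduct_self_eq_zero.mp hc)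
    have h2x : 0 < x ⬝ᵥ x := lt_of_le_of_ne hnn (Ne.symm hne)
    have h3 := hpsd x
    rw [h1] at h3
    have hlam0 : 0 ≤ lam := by nlinarith
    exact lt_of_le_of_ne hlam0 (Ne.symm hlam_ne)
  set M := D2 * Lp * D2 with hM2
  have hMcond : N * M * N = N := by
    rw [hNSLS, hM2]
    calc S * L * S * (D2 * Lp * D2) * (S * L * S)
        = S * L * ((S * D2) * Lp * (D2 * S)) * L * S := by noncomm_ring
      _ = S * L * Lp * L * S := by rw [hSD2, hD2S, one_mul, mul_one]
      _ = S * (L * Lp * L) * S := by noncomm_ring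
      _ = S * L * S := by rw [hLp.1]
  set e : V → ℝ := (Pi.single u 1 : V → ℝ) - (Pi.single v 1 : V → ℝ) with he
  set f : V → ℝ := S *ᵥ e with hf
  have hMS : M * S = D2 * Lp := by
    rw [hM2, Matrix.mul_assoc (D2 * Lp) D2 S, hD2S, Matrix.mul_one]
  have hfM : effRes Lp u v = f ⬝ᵥ (M *ᵥ f) := by
    have step : f ⬝ᵥ (M *ᵥ f) = e ⬝ᵥ (Lp *ᵥ e) := by
      rw [hf, mulVec_mulVec, hMS, ← mulVec_mulVec, hD2, dot_diag_comm, hS,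
        mulVec_mulVec, diagonal_mul_diagonal]
      have hone : (fun w => Real.sqrt (G.degree w : ℝ) * s w) = fun _ => (1 : ℝ) :=
        funext fun w => by rw [mul_comm]; exact hs_mul w
      rw [hone, Matrix.diagonal_one, Matrix.one_mulVec]
    rw [step]; rfl
  have hff : f ⬝ᵥ f = 1 / (G.degree u : ℝ) + 1 / (G.degree v : ℝ) := by
    rw [hf, hS, he]
    simp only [dotProduct, mulVec_diagonal, Pi.sub_apply]
    have hterm : ∀ w : V,
        (s w * ((Pi.single u 1 : V → ℝ) w - (Pi.single v 1 : V → ℝ) w)) *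
          (s w * ((Pi.single u 1 : V → ℝ) w - (Pi.single v 1 : V → ℝ) w)) =
        (if w = u then (G.degree u : ℝ)⁻¹ else 0) +
          (if w = v then (G.degree v : ℝ)⁻¹ else 0) := by
      intro w
      by_cases hu : w = u
      · subst hu
        rw [if_pos rfl, if_neg huv, add_zero, Pi.single_eq_same, Pi.single_eq_of_ne huv]
        linear_combination hs_sq w
      · by_cases hv : w = v
        · subst hv
          rw [if_neg hu, if_pos rfl, zero_add, Pi.single_eq_same, Pi.single_eq_of_ne hu]
          linear_combination hs_sq w
        · rw [if_neg hu, if_neg hv, add_zero, Pi.single_eq_of_ne hu, Pi.single_eq_of_ne hv]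
          ring
    rw [Finset.sum_congr rfl fun w _ => hterm w, Finset.sum_add_distrib,
      Finset.sum_ite_eq' univ u, Finset.sum_ite_eq' univ v]
    simp [one_div]
  have hker : ∀ x : V → ℝ, N *ᵥ x = 0 → f ⬝ᵥ x = 0 := by
    intro x hx
    have hx' : S *ᵥ (L *ᵥ (S *ᵥ x)) = 0 := by
      rw [mulVec_mulVec, mulVec_mulVec, ← hNSLS, hx]
    have hLz : L *ᵥ (S *ᵥ x) = 0 := by
      funext w
      have hw := congrFun hx' w
      rw [hS] at hw
      rw [mulVec_diagonal] at hw
      have := (mul_eq_zero.mp hw).resolve_left (hs_pos w).ne'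
      simpa using this
    have hreach := (SimpleGraph.lapMatrix_mulVec_eq_zero_iff_forall_reachable (G := G)
      (x := S *ᵥ x)).mp hLz
    have hcon : s u * x u = s v * x v := by
      have h2 := hreach u v (hG.preconnected u v)
      rw [hS] at h2
      simpa [mulVec_diagonal] using h2
    rw [hf, hS, he]
    simp only [dotProduct, mulVec_diagonal, Pi.sub_apply]
    have hterm : ∀ w : V,
        (s w * ((Pi.single u 1 : V → ℝ) w - (Pi.single v 1 : V → ℝ) w)) * x w =
        (if w = u then s u * x u else 0) - (if w = v then s v * x v else 0) := by
      intro w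
      by_cases hu : w = u
      · subst hu
        rw [if_pos rfl, if_neg huv, Pi.single_eq_same, Pi.single_eq_of_ne huv]
        ring
      · by_cases hv : w = v
        · subst hv
          rw [if_neg hu, if_pos rfl, Pi.single_eq_same, Pi.single_eq_of_ne hu]
          ring
        · rw [if_neg hu, if_neg hv, Pi.single_eq_of_ne hu, Pi.single_eq_of_ne hv]
          ring
    rw [Finset.sum_congr rfl fun w _ => hterm w, Finset.sum_sub_distrib,
      Finset.sum_ite_eq' univ u, Finset.sum_ite_eq' univ v]
    simp [hcon]
  have key := spectral_bound N M hN hpsd htwo lam hlam_pos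
    (fun t ht htne => hlam_min t ht htne) hMcond f hker
  have hdmin_pos : 0 < dmin := by
    obtain ⟨w, hw⟩ := hdmin_mem; rw [← hw]; exact hdeg w
  rw [hfM, ← hff]
  calc |f ⬝ᵥ (M *ᵥ f) - f ⬝ᵥ f| ≤ (1 / lam) * (f ⬝ᵥ f) := key
    _ ≤ (1 / lam) * (2 / dmin) := by
      apply mul_le_mul_of_nonneg_left _ (by positivity)
      rw [hff]
      have h1 : 1 / (G.degree u : ℝ) ≤ 1 / dmin :=
        one_div_le_one_div_of_le hdmin_pos (hdmin_le u)
      have h2 : 1 / (G.degree v : ℝ) ≤ 1 / dmin :=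
        one_div_le_one_div_of_le hdmin_pos (hdmin_le v)
      have h3 : (2 : ℝ) / dmin = 1 / dmin + 1 / dmin := by ring
      linarith
end

section
/- Let G be a connected simple graph and let (u,v) ∈ E be an edge. Then the effective resistance between u and v satisfies R_{u,v} ≤ 2 / (2 + #Δ(u,v)), where #Δ(u,v) = |N_u ∩ N_v| is the number of triangles of G containing the edge (u,v). -/
open Matrix Finset

variable {V : Type*}

private lemma pair_sum_eq [Fintype V] (A H : V → V → ℝ) (x bb : V → ℝ)
    (hAs : ∀ i j : V, A i j = A j i) (hHa : ∀ i j : V, H j i = -(H i j))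
    (hrow : ∀ i : V, ∑ j, A i j * H i j = bb i) :
    ∑ i : V, ∑ j : V, A i j * H i j * (x i - x j) = 2 * ∑ i : V, bb i * x i := by
  have h1 : ∑ i : V, ∑ j : V, A i j * H i j * x i = ∑ i : V, bb i * x i := by
    refine Finset.sum_congr rfl fun i _ => ?_
    rw [← Finset.sum_mul, hrow i]
  have h2 : ∑ i : V, ∑ j : V, A i j * H i j * x j = -∑ i : V, bb i * x i := by
    rw [Finset.sum_comm]
    have : ∀ j : V, ∑ i : V, A i j * H i j * x j = -(bb j * x j) := by
      intro j
      have : ∀ i : V, A i j * H i j = -(A j i * H j i) := by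
        intro i
        rw [hAs j i, hHa j i]
        ring
      simp_rw [← Finset.sum_mul, this, Finset.sum_neg_distrib, hrow j]
      ring
    rw [Finset.sum_congr rfl fun j _ => this j, Finset.sum_neg_distrib]
  have h3 : ∀ i j : V, A i j * H i j * (x i - x j)
      = A i j * H i j * x i - A i j * H i j * x j := by
    intros; ring
  simp_rw [h3, Finset.sum_sub_distrib, h1, h2]
  ring


private def flow [DecidableEq V] (u v : V) (S : Finset V) (c0 c : ℝ) (i j : V) : ℝ :=
  if i = u ∧ j = v then c0 else
  if i = v ∧ j = u then -c0 else
  if i = u ∧ j ∈ S then c else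
  if i ∈ S ∧ j = u then -c else
  if i ∈ S ∧ j = v then c else
  if i = v ∧ j ∈ S then -c else 0

set_option maxHeartbeats 1000000 in
private lemma flow_anti [DecidableEq V] (u v : V) (S : Finset V)
    (hune : u ≠ v) (huS : u ∉ S) (hvS : v ∉ S) (c0 c : ℝ) (i j : V) :
    flow u v S c0 c j i = -flow u v S c0 c i j := by
  simp only [flow]
  split_ifs <;> first | ring1 | simp_all

set_option maxHeartbeats 1000000 in
private lemma flow_sq [DecidableEq V] (u v : V) (S : Finset V)
    (hune : u ≠ v) (huS : u ∉ S) (hvS : v ∉ S) (c0 c : ℝ) (i j : V) :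
    flow u v S c0 c i j ^ 2
      = (if i = u ∧ j = v then c0^2 else 0) + (if i = v ∧ j = u then c0^2 else 0)
      + (if i = u ∧ j ∈ S then c^2 else 0) + (if i ∈ S ∧ j = u then c^2 else 0)
      + (if i ∈ S ∧ j = v then c^2 else 0) + (if i = v ∧ j ∈ S then c^2 else 0) := by
  simp only [flow]
  split_ifs <;> first | ring1 | simp_all

set_option maxHeartbeats 2000000 in
/-- for an edge `(u,v)` of a connected simple graph,
`R_{u,v} ≤ 2 / (2 + #Δ(u,v))`, where `#Δ(u,v) = |N_u ∩ N_v|` is the number of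
triangles containing the edge `(u,v)`. -/
theorem effRes_le_of_triangles
    [Fintype V] [DecidableEq V] (G : SimpleGraph V) [DecidableRel G.Adj]
    (hG : G.Connected) (u v : V) (huv : G.Adj u v)
    (Lp : Matrix V V ℝ) (hLp : IsMoorePenroseInv (G.lapMatrix ℝ) Lp) :
    effRes Lp u v ≤
      2 / (2 + ((G.neighborFinset u ∩ G.neighborFinset v).card : ℝ)) := by
  classical
  set L := G.lapMatrix ℝ with hL
  set A := G.adjMatrix ℝ with hA
  set b : V → ℝ := (Pi.single u 1 : V → ℝ) - (Pi.single v 1 : V → ℝ) with hb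
  set x : V → ℝ := Lp.mulVec b with hx
  have hbapp : ∀ i, b i = (if i = u then (1:ℝ) else 0) - (if i = v then 1 else 0) := by
    intro i
    simp [hb, Pi.single_apply]
  have hsumb : ∑ i, b i = 0 := by
    simp [hbapp]
  -- Step B : L *ᵥ x = b
  have hLsymm : Lᵀ = L := G.isSymm_lapMatrix (R := ℝ)
  have hLLQ : L * (L * Lp) = L := by
    have h1 := congrArg Matrix.transpose hLp.1
    rw [Matrix.transpose_mul, hLp.2.2.1, hLsymm] at h1
    exact h1
  have hker : L.mulVec (L.mulVec x - b) = 0 := by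
    rw [Matrix.mulVec_sub]
    have h2 : L.mulVec (L.mulVec x) = L.mulVec b := by
      rw [hx, Matrix.mulVec_mulVec, Matrix.mulVec_mulVec, Matrix.mul_assoc, hLLQ]
    rw [h2]
    simp
  have hconst : ∀ i j, (L.mulVec x - b) i = (L.mulVec x - b) j := by
    intro i j
    have := (G.lapMatrix_mulVec_eq_zero_iff_forall_reachable (x := L.mulVec x - b)).mp
      (by exact hker)
    exact this i j (hG.preconnected i j)
  have hcolsum : ∀ j, ∑ i, L i j = 0 := by
    intro j
    have h1 : L.mulVec (fun _ => 1) = 0 := G.lapMatrix_mulVec_const_eq_zero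
    have h2 := congrFun h1 j
    simp only [Matrix.mulVec, dotProduct, mul_one] at h2
    calc ∑ i, L i j = ∑ i, L j i := by
          refine Finset.sum_congr rfl fun i _ => ?_
          conv_lhs => rw [← hLsymm]
          rfl
      _ = 0 := h2
  have hsumLx : ∑ i, (L.mulVec x) i = 0 := by
    simp only [Matrix.mulVec, dotProduct]
    rw [Finset.sum_comm]
    simp [← Finset.sum_mul, hcolsum]
  have hLx : L.mulVec x = b := by
    have hcard : (0:ℝ) < (Fintype.card V : ℝ) := by
      have : 0 < Fintype.card V := Fintype.card_pos_iff.mpr ⟨u⟩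
      exact_mod_cast this
    have hsum0 : ∑ i, (L.mulVec x - b) i = 0 := by
      simp [Finset.sum_sub_distrib, hsumLx, hsumb]
    have hc : ∀ i, (L.mulVec x - b) i = 0 := by
      intro i
      have : ∑ j, (L.mulVec x - b) j = (Fintype.card V : ℝ) * (L.mulVec x - b) i := by
        rw [Finset.sum_congr rfl fun j _ => hconst j i]
        simp [Finset.sum_const, mul_comm]
        ring
      rw [hsum0] at this
      have := this.symm
      rcases mul_eq_zero.mp this with h | h
      · exact absurd h (ne_of_gt hcard)
      · exact h
    funext i
    have := hc i
    simpa [sub_eq_zero] using this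
  -- the flow
  set S := G.neighborFinset u ∩ G.neighborFinset v with hS
  set t : ℝ := (S.card : ℝ) with ht
  have ht0 : (0:ℝ) ≤ t := by positivity
  have htp : (0:ℝ) < 2 + t := by linarith
  set c0 : ℝ := 2 / (2 + t) with hc0
  set c : ℝ := 1 / (2 + t) with hc
  have hune : u ≠ v := huv.ne
  have hSmem : ∀ w, w ∈ S ↔ G.Adj u w ∧ G.Adj v w := by
    intro w
    simp [hS, Finset.mem_inter, SimpleGraph.mem_neighborFinset]
  have huS : u ∉ S := fun h => G.irrefl ((hSmem u).mp h).1
  have hvS : v ∉ S := fun h => G.irrefl ((hSmem v).mp h).2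
  set F : V → V → ℝ := flow u v S c0 c with hF
  have hFanti : ∀ i j, F j i = -F i j := fun i j =>
    flow_anti u v S hune huS hvS c0 c i j
  have hAsymm : ∀ i j, A i j = A j i := by
    intro i j
    simp [hA, SimpleGraph.adjMatrix_apply, G.adj_comm]
  have hAnn : ∀ i j, (0:ℝ) ≤ A i j := by
    intro i j
    simp only [hA, SimpleGraph.adjMatrix_apply]
    split_ifs <;> norm_num
  have hsum_memS : ∀ (e : ℝ), ∑ j, (if j ∈ S then e else 0) = t * e := by
    intro e
    rw [Finset.sum_ite_mem, Finset.univ_inter, Finset.sum_const, nsmul_eq_mul, ht]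
  have hdiv : ∀ i, ∑ j, A i j * F i j = b i := by
    intro i
    by_cases hiu : i = u
    · subst hiu
      have point : ∀ j, A i j * F i j
          = (if j = v then c0 else 0) + (if j ∈ S then c else 0) := by
        intro j
        by_cases hjv : j = v
        · subst hjv
          simp [hF, flow, hA, SimpleGraph.adjMatrix_apply, huv, hune, hvS, huS]
        · by_cases hjS : j ∈ S
          · have hadj : G.Adj i j := ((hSmem j).mp hjS).1
            simp [hF, flow, hA, SimpleGraph.adjMatrix_apply, hadj, hjv, hjS, hune, huS]
          · simp [hF, flow, hjv, hjS, hune, huS]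
      rw [Finset.sum_congr rfl fun j _ => point j, Finset.sum_add_distrib,
        Finset.sum_ite_eq' Finset.univ v (fun _ => c0), hsum_memS]
      rw [hbapp]
      simp only [Finset.mem_univ, if_true, hune, if_neg, ite_false]
      rw [hc0, hc]
      field_simp
      norm_num
    · by_cases hiv : i = v
      · subst hiv
        have point : ∀ j, A i j * F i j
            = (if j = u then -c0 else 0) + (if j ∈ S then -c else 0) := by
          intro j
          by_cases hju : j = u
          · subst hju
            simp [hF, flow, hA, SimpleGraph.adjMatrix_apply, huv.symm, hune, Ne.symm hune, hvS, huS]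
          · by_cases hjS : j ∈ S
            · have hadj : G.Adj i j := ((hSmem j).mp hjS).2
              simp [hF, flow, hA, SimpleGraph.adjMatrix_apply, hadj, hju, hjS, hune, Ne.symm hune, hvS, huS]
            · simp [hF, flow, hju, hjS, hune, Ne.symm hune, hvS, huS]
        rw [Finset.sum_congr rfl fun j _ => point j, Finset.sum_add_distrib,
          Finset.sum_ite_eq' Finset.univ u (fun _ => -c0), hsum_memS]
        rw [hbapp]
        simp only [Finset.mem_univ, if_true, hune, Ne.symm hune, if_neg, ite_false, ite_true]
        rw [hc0, hc]
        field_simp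
        ring
      · by_cases hiS : i ∈ S
        · have hadju : G.Adj u i := ((hSmem i).mp hiS).1
          have hadjv : G.Adj v i := ((hSmem i).mp hiS).2
          have point : ∀ j, A i j * F i j
              = (if j = u then -c else 0) + (if j = v then c else 0) := by
            intro j
            by_cases hju : j = u
            · subst hju
              simp [hF, flow, hA, SimpleGraph.adjMatrix_apply, hadju.symm, hiu, hiv, hiS, hune, Ne.symm hune, huS, hvS]
            · by_cases hjv : j = v
              · subst hjv
                simp [hF, flow, hA, SimpleGraph.adjMatrix_apply, hadjv.symm, hiu, hiv, hiS, hju, hune, Ne.symm hune, huS, hvS]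
              · simp [hF, flow, hiu, hiv, hiS, hju, hjv, huS, hvS]
          rw [Finset.sum_congr rfl fun j _ => point j, Finset.sum_add_distrib,
            Finset.sum_ite_eq' Finset.univ u (fun _ => -c),
            Finset.sum_ite_eq' Finset.univ v (fun _ => c)]
          rw [hbapp]
          simp [hiu, hiv]
        · have point : ∀ j, A i j * F i j = 0 := by
            intro j
            have : F i j = 0 := by
              simp [hF, flow, hiu, hiv, hiS]
            rw [this, mul_zero]
          rw [Finset.sum_congr rfl fun j _ => point j, Finset.sum_const, smul_zero]
          rw [hbapp]
          simp [hiu, hiv]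
  have hsupp : ∀ i j, A i j * F i j ^ 2 = F i j ^ 2 := by
    intro i j
    by_cases h : G.Adj i j
    · simp [hA, SimpleGraph.adjMatrix_apply, h]
    · have hF0 : F i j = 0 := by
        simp only [hF, flow]
        split_ifs with h1 h2 h3 h4 h5 h6
        · exact absurd (h1.1 ▸ h1.2 ▸ huv) h
        · exact absurd (h2.1 ▸ h2.2 ▸ huv.symm) h
        · exact absurd (h3.1 ▸ ((hSmem j).mp h3.2).1) h
        · exact absurd (h4.2 ▸ ((hSmem i).mp h4.1).1.symm) h
        · exact absurd (h5.2 ▸ ((hSmem i).mp h5.1).2.symm) h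
        · exact absurd (h6.1 ▸ ((hSmem j).mp h6.2).2) h
        · rfl
      rw [hF0]
      ring
  -- row sums of the potential flow
  have hLrow : ∀ i, ∑ j, A i j * (x i - x j) = b i := by
    intro i
    have hdeg : ∑ j, A i j = (G.degree i : ℝ) := by
      simp only [hA, SimpleGraph.adjMatrix_apply]
      rw [Finset.sum_boole]
      congr 1
      rw [SimpleGraph.degree, SimpleGraph.neighborFinset_eq_filter]
    have hAx : ∑ j, A i j * x j = ∑ w ∈ G.neighborFinset i, x w := by
      have := G.adjMatrix_mulVec_apply (α := ℝ) i x
      simpa [Matrix.mulVec, dotProduct, hA] using this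
    have h1 : ∑ j, A i j * (x i - x j) = (∑ j, A i j) * x i - ∑ j, A i j * x j := by
      simp [mul_sub, Finset.sum_sub_distrib, Finset.sum_mul]
    rw [h1, hdeg, hAx, ← G.lapMatrix_mulVec_apply, ← hL, hLx]
  -- the two cross sums
  have T1 : ∑ i, ∑ j, A i j * F i j * (x i - x j) = 2 * ∑ i, b i * x i :=
    pair_sum_eq A F x b hAsymm hFanti hdiv
  have T2 : ∑ i, ∑ j, A i j * (x i - x j) * (x i - x j) = 2 * ∑ i, b i * x i :=
    pair_sum_eq A (fun i j => x i - x j) x b hAsymm (fun i j => by ring) hLrow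
  have key : (0:ℝ) ≤ ∑ i, ∑ j, A i j * (F i j - (x i - x j))^2 :=
    Finset.sum_nonneg fun i _ => Finset.sum_nonneg fun j _ =>
      mul_nonneg (hAnn i j) (sq_nonneg _)
  have expand : ∑ i, ∑ j, A i j * (F i j - (x i - x j))^2
      = (∑ i, ∑ j, A i j * F i j ^ 2)
        - 2 * (∑ i, ∑ j, A i j * F i j * (x i - x j))
        + ∑ i, ∑ j, A i j * (x i - x j) * (x i - x j) := by
    have h : ∀ i j, A i j * (F i j - (x i - x j))^2
        = A i j * F i j ^ 2 - 2 * (A i j * F i j * (x i - x j))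
          + A i j * (x i - x j) * (x i - x j) := by
      intros; ring
    simp_rw [h, Finset.sum_add_distrib, Finset.sum_sub_distrib, ← Finset.mul_sum]
  -- compute the flow energy
  have hF2 : ∀ i j, F i j ^ 2
      = (if i = u ∧ j = v then c0^2 else 0) + (if i = v ∧ j = u then c0^2 else 0)
      + (if i = u ∧ j ∈ S then c^2 else 0) + (if i ∈ S ∧ j = u then c^2 else 0)
      + (if i ∈ S ∧ j = v then c^2 else 0) + (if i = v ∧ j ∈ S then c^2 else 0) :=
    fun i j => flow_sq u v S hune huS hvS c0 c i j
  have hsum_single : ∀ (w : V) (e : ℝ), ∑ j, (if j = w then e else 0) = e := by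
    intro w e
    rw [Finset.sum_ite_eq' Finset.univ w (fun _ => e)]
    simp
  have p1 : ∑ i, ∑ j, (if i = u ∧ j = v then c0^2 else 0) = c0^2 := by
    have inner : ∀ i : V, (∑ j, if i = u then (if j = v then c0^2 else 0) else 0)
        = (if i = u then c0^2 else 0) := by
      intro i
      by_cases hi : i = u <;> simp [hi, hsum_single v (c0^2)]
    simp_rw [ite_and]
    rw [Finset.sum_congr rfl fun i _ => inner i]
    exact hsum_single u _
  have p2 : ∑ i, ∑ j, (if i = v ∧ j = u then c0^2 else 0) = c0^2 := by
    have inner : ∀ i : V, (∑ j, if i = v then (if j = u then c0^2 else 0) else 0)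
        = (if i = v then c0^2 else 0) := by
      intro i
      by_cases hi : i = v <;> simp [hi, hsum_single u (c0^2)]
    simp_rw [ite_and]
    rw [Finset.sum_congr rfl fun i _ => inner i]
    exact hsum_single v _
  have p3 : ∑ i, ∑ j, (if i = u ∧ j ∈ S then c^2 else 0) = t * c^2 := by
    have inner : ∀ i : V, (∑ j, if i = u then (if j ∈ S then c^2 else 0) else 0)
        = (if i = u then t * c^2 else 0) := by
      intro i
      by_cases hi : i = u <;> simp [hi, hsum_memS (c^2)]
    simp_rw [ite_and]
    rw [Finset.sum_congr rfl fun i _ => inner i]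
    exact hsum_single u _
  have p4 : ∑ i, ∑ j, (if i ∈ S ∧ j = u then c^2 else 0) = t * c^2 := by
    have inner : ∀ i : V, (∑ j, if i ∈ S then (if j = u then c^2 else 0) else 0)
        = (if i ∈ S then c^2 else 0) := by
      intro i
      by_cases hi : i ∈ S <;> simp [hi, hsum_single u (c^2)]
    simp_rw [ite_and]
    rw [Finset.sum_congr rfl fun i _ => inner i]
    exact hsum_memS _
  have p5 : ∑ i, ∑ j, (if i ∈ S ∧ j = v then c^2 else 0) = t * c^2 := by
    have inner : ∀ i : V, (∑ j, if i ∈ S then (if j = v then c^2 else 0) else 0)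
        = (if i ∈ S then c^2 else 0) := by
      intro i
      by_cases hi : i ∈ S <;> simp [hi, hsum_single v (c^2)]
    simp_rw [ite_and]
    rw [Finset.sum_congr rfl fun i _ => inner i]
    exact hsum_memS _
  have p6 : ∑ i, ∑ j, (if i = v ∧ j ∈ S then c^2 else 0) = t * c^2 := by
    have inner : ∀ i : V, (∑ j, if i = v then (if j ∈ S then c^2 else 0) else 0)
        = (if i = v then t * c^2 else 0) := by
      intro i
      by_cases hi : i = v <;> simp [hi, hsum_memS (c^2)]
    simp_rw [ite_and]
    rw [Finset.sum_congr rfl fun i _ => inner i]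
    exact hsum_single v _
  have hS2 : ∑ i, ∑ j, A i j * F i j ^ 2 = 2 * c0^2 + 4 * t * c^2 := by
    have step1 : ∑ i, ∑ j, A i j * F i j ^ 2
        = ∑ i : V, ∑ j : V,
          ((if i = u ∧ j = v then c0^2 else 0) + (if i = v ∧ j = u then c0^2 else 0)
          + (if i = u ∧ j ∈ S then c^2 else 0) + (if i ∈ S ∧ j = u then c^2 else 0)
          + (if i ∈ S ∧ j = v then c^2 else 0) + (if i = v ∧ j ∈ S then c^2 else 0)) :=
      Finset.sum_congr rfl fun i _ => Finset.sum_congr rfl fun j _ => by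
        rw [hsupp i j, hF2 i j]
    rw [step1]
    simp_rw [Finset.sum_add_distrib]
    rw [p1, p2, p3, p4, p5, p6]
    ring
  -- conclude
  have hmain : 2 * (∑ i, b i * x i) ≤ 2 * c0^2 + 4 * t * c^2 := by
    rw [expand, T1, T2, hS2] at key
    linarith
  have hRes : effRes Lp u v = ∑ i, b i * x i := rfl
  have hval : c0^2 + 2 * t * c^2 = 2 / (2 + t) := by
    rw [hc0, hc]
    field_simp
  rw [hRes]
  calc ∑ i, b i * x i ≤ c0^2 + 2 * t * c^2 := by linarith
    _ = 2 / (2 + t) := hval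
end

section
/- Let G be a finite connected simple graph and u, v distinct vertices. Let H_v : V → ℝ be the (unique) expected-hitting-time function to v, i.e. H_v(v) = 0 and H_v(x) = 1 + Σ_{y∈V} (A_{xy}/d_x) H_v(y) for all x ≠ v, and let H_u be defined analogously with the roles of u and v exchanged. Then the commute time satisfies H_v(u) + H_u(v) = 2|E| · R_{u,v}. -/
open Matrix Finset

variable {V : Type*}

/-- `H` is the expected-hitting-time function to `v` for the simple random walk
on `G`: `H(v) = 0` and `H(x) = 1 + Σ_y (A_{xy}/d_x)·H(y)` for `x ≠ v`. -/
def IsHittingTimeTo [Fintype V] [DecidableEq V] (G : SimpleGraph V)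
    [DecidableRel G.Adj] (v : V) (H : V → ℝ) : Prop :=
  H v = 0 ∧ ∀ x : V, x ≠ v →
    H x = 1 + ∑ y : V, ((G.adjMatrix ℝ) x y / (G.degree x : ℝ)) * H y

/-- In a connected graph with at least two vertices, each degree is positive. -/
lemma aux_degree_pos [Fintype V] [DecidableEq V] (G : SimpleGraph V)
    [DecidableRel G.Adj] (hG : G.Connected) (u v : V) (huv : u ≠ v) (x : V) :
    0 < G.degree x := by
  rw [SimpleGraph.degree_pos_iff_exists_adj]
  rcases eq_or_ne x u with rfl | hx
  · obtain ⟨w⟩ := hG.preconnected x v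
    cases w with
    | nil => exact absurd rfl huv
    | cons h _ => exact ⟨_, h⟩
  · obtain ⟨w⟩ := hG.preconnected x u
    cases w with
    | nil => exact absurd rfl hx
    | cons h _ => exact ⟨_, h⟩

/-- Laplacian applied to a hitting-time function. -/
lemma aux_lap_hitting [Fintype V] [DecidableEq V] (G : SimpleGraph V)
    [DecidableRel G.Adj] (hG : G.Connected) (u v : V) (huv : u ≠ v)
    (H : V → ℝ) (hH : IsHittingTimeTo G v H) :
    G.lapMatrix ℝ *ᵥ H = fun x =>
      (G.degree x : ℝ) - 2 * (G.edgeFinset.card : ℝ) * (Pi.single v 1 : V → ℝ) x := by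
  have hne : ∀ x ≠ v, (G.lapMatrix ℝ *ᵥ H) x = (G.degree x : ℝ) := by
    intro x hx
    have hd : (G.degree x : ℝ) ≠ 0 := by
      exact_mod_cast (aux_degree_pos G hG u v huv x).ne'
    have heq := hH.2 x hx
    have hsum : ∑ y : V, ((G.adjMatrix ℝ) x y / (G.degree x : ℝ)) * H y
        = (∑ y ∈ G.neighborFinset x, H y) / (G.degree x : ℝ) := by
      rw [Finset.sum_div]
      have hpt : ∀ y : V, ((G.adjMatrix ℝ) x y / (G.degree x : ℝ)) * H y
          = if G.Adj x y then H y / (G.degree x : ℝ) else 0 := by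
        intro y
        by_cases h : G.Adj x y
        · simp [h, div_eq_mul_inv, mul_comm]
        · simp [h]
      simp_rw [hpt]
      rw [← Finset.sum_filter]
      congr 1
      ext y
      simp [SimpleGraph.mem_neighborFinset]
    rw [SimpleGraph.lapMatrix_mulVec_apply, heq, hsum]
    field_simp
    ring
  have hcolsum : ∑ x : V, (G.lapMatrix ℝ *ᵥ H) x = 0 := by
    have hrow : ∀ y : V, ∑ x : V, (G.lapMatrix ℝ) x y = 0 := by
      intro y
      have := congrFun (G.lapMatrix_mulVec_const_eq_zero (R := ℝ)) y
      simp only [Matrix.mulVec, dotProduct, mul_one, Pi.zero_apply] at this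
      calc ∑ x : V, (G.lapMatrix ℝ) x y = ∑ x : V, (G.lapMatrix ℝ) y x := by
            apply Finset.sum_congr rfl
            intro x _
            exact (G.isSymm_lapMatrix (R := ℝ)).apply y x
        _ = 0 := this
    simp only [Matrix.mulVec, dotProduct]
    rw [Finset.sum_comm]
    simp only [← Finset.sum_mul]
    rw [Finset.sum_congr rfl fun y _ => by rw [hrow y, zero_mul]]
    simp
  have hv : (G.lapMatrix ℝ *ᵥ H) v
      = (G.degree v : ℝ) - 2 * (G.edgeFinset.card : ℝ) := by
    have hsplit : ∑ x : V, (G.lapMatrix ℝ *ᵥ H) x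
        = (G.lapMatrix ℝ *ᵥ H) v + ∑ x ∈ Finset.univ.erase v, (G.lapMatrix ℝ *ᵥ H) x := by
      rw [Finset.add_sum_erase _ _ (Finset.mem_univ v)]
    have hrest : ∑ x ∈ Finset.univ.erase v, (G.lapMatrix ℝ *ᵥ H) x
        = ∑ x ∈ Finset.univ.erase v, (G.degree x : ℝ) := by
      apply Finset.sum_congr rfl
      intro x hx
      exact hne x (Finset.ne_of_mem_erase hx)
    have hdeg : (G.degree v : ℝ) + ∑ x ∈ Finset.univ.erase v, (G.degree x : ℝ)
        = 2 * (G.edgeFinset.card : ℝ) := by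
      have h2 : ∑ x : V, (G.degree x : ℝ) = 2 * (G.edgeFinset.card : ℝ) := by
        exact_mod_cast congrArg (Nat.cast : ℕ → ℝ) G.sum_degrees_eq_twice_card_edges
      rw [Finset.add_sum_erase _ (fun x => (G.degree x : ℝ)) (Finset.mem_univ v), h2]
    rw [hcolsum, hrest] at hsplit
    linarith
  funext x
  rcases eq_or_ne x v with rfl | hx
  · simp [hv]
  · simp [hne x hx, Pi.single_eq_of_ne hx]

/-- commute time identity: for distinct vertices `u, v` of a
finite connected simple graph, the commute time equals `2|E|·R_{u,v}`:
`H_v(u) + H_u(v) = 2|E|·R_{u,v}`. -/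
theorem commute_time_eq_effective_resistance
    [Fintype V] [DecidableEq V] (G : SimpleGraph V) [DecidableRel G.Adj]
    (hG : G.Connected) (u v : V) (huv : u ≠ v)
    (Hv Hu : V → ℝ)
    (hHv : IsHittingTimeTo G v Hv)
    (hHu : IsHittingTimeTo G u Hu)
    (Lp : Matrix V V ℝ) (hLp : IsMoorePenroseInv (G.lapMatrix ℝ) Lp) :
    Hv u + Hu v = 2 * (G.edgeFinset.card : ℝ) * effRes Lp u v := by
  set L := G.lapMatrix ℝ with hL
  set E : ℝ := (G.edgeFinset.card : ℝ) with hE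
  have hEpos : 0 < E := by
    have hdeg := aux_degree_pos G hG u v huv u
    have h2 : 0 < ∑ x : V, G.degree x :=
      lt_of_lt_of_le hdeg (Finset.single_le_sum (f := fun x => G.degree x)
        (fun x _ => Nat.zero_le _) (Finset.mem_univ u))
    rw [G.sum_degrees_eq_twice_card_edges] at h2
    have h3 : 0 < G.edgeFinset.card := by omega
    rw [hE]
    exact_mod_cast h3
  set g : V → ℝ := Hv - Hu with hg
  set w : V → ℝ := (Pi.single u 1 : V → ℝ) - (Pi.single v 1 : V → ℝ) with hw
  have hLg : L *ᵥ g = (2 * E) • w := by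
    have h1 := aux_lap_hitting G hG u v huv Hv hHv
    have h2 := aux_lap_hitting G hG v u huv.symm Hu hHu
    rw [hg, Matrix.mulVec_sub, h1, h2]
    funext x
    simp only [Pi.sub_apply, Pi.smul_apply, hw, smul_eq_mul]
    ring
  -- key quadratic identity
  have key : (L *ᵥ g) ⬝ᵥ (Lp *ᵥ (L *ᵥ g)) = g ⬝ᵥ (L *ᵥ g) := by
    have hsymm : Lᵀ = L := G.isSymm_lapMatrix (R := ℝ)
    calc (L *ᵥ g) ⬝ᵥ (Lp *ᵥ (L *ᵥ g))
        = (g ᵥ* L) ⬝ᵥ (Lp *ᵥ (L *ᵥ g)) := by rw [← Matrix.mulVec_transpose, hsymm]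
      _ = g ⬝ᵥ (L *ᵥ (Lp *ᵥ (L *ᵥ g))) := (Matrix.dotProduct_mulVec g L _).symm
      _ = g ⬝ᵥ ((L * Lp * L) *ᵥ g) := by rw [← Matrix.mulVec_mulVec, ← Matrix.mulVec_mulVec]
      _ = g ⬝ᵥ (L *ᵥ g) := by rw [hLp.1]
  have hwg : w ⬝ᵥ g = Hv u + Hu v := by
    simp only [hw, hg, sub_dotProduct, single_dotProduct, one_mul,
      Pi.sub_apply, hHv.1, hHu.1]
    ring
  have hres : effRes Lp u v = (Hv u + Hu v) / (2 * E) := by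
    have hwexp : w = (2 * E)⁻¹ • (L *ᵥ g) := by
      rw [hLg, smul_smul, inv_mul_cancel₀ (by positivity), one_smul]
    have : effRes Lp u v = (2 * E)⁻¹ * ((2 * E)⁻¹ * ((L *ᵥ g) ⬝ᵥ (Lp *ᵥ (L *ᵥ g)))) := by
      rw [effRes]
      rw [show ((Pi.single u 1 : V → ℝ) - (Pi.single v 1 : V → ℝ)) = w from rfl, hwexp]
      rw [Matrix.mulVec_smul, smul_dotProduct, dotProduct_smul]
      simp [smul_eq_mul]
    rw [this, key, hLg]
    rw [dotProduct_smul]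
    have hgw : g ⬝ᵥ w = w ⬝ᵥ g := dotProduct_comm g w
    rw [smul_eq_mul, hgw, hwg]
    field_simp
  rw [hres]
  field_simp
end
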